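/- arXiv:1609.06646 — 8 statements merged into one kernel-verified Lean document; each statement's English description precedes it below -/
import Mathlib

section
/- Let n and r be positive integers. For every natural number k, the coefficient of X^{rk} in the polynomial (X + X^2 + ... + X^{r-1})^n (an element of ℤ[X]; for r = 1 this polynomial is 0 when n ≥ 1) equals the number of words w ∈ S(n,r) with exactly k ascents. (Equivalently, applying the operator E_r, defined on polynomials by E_r(X^m) = X^{m/r} if r divides m and E_r(X^m) = 0 otherwise, one has E_r((X + X^2 + ... + X^{r-1})^n) = Σ_{w ∈ S(n,r)} X^{asc(w)}.) -/
open scoped Classical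

noncomputable section

/-- Value of a word `w : Fin (n+1) → ℕ` at a natural index (junk value `0` out of range). -/
def wv {n : ℕ} (w : Fin (n + 1) → ℕ) (k : ℕ) : ℕ :=
  if h : k < n + 1 then w ⟨k, h⟩ else 0

/-- The number of ascents of a word `w = (w_0, w_1, …, w_n)`, i.e. the number of indices
`i ∈ {0,…,n-1}` with `w_i < w_{i+1}`. -/
def asc {n : ℕ} (w : Fin (n + 1) → ℕ) : ℕ :=
  ((Finset.range n).filter fun i => wv w i < wv w (i + 1)).card

/-- The set `S(n,r)` of Smirnov words `w = (w_0, …, w_n) ∈ {0,…,r-1}^{n+1}` with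
`w_0 = w_n = 0` and no two consecutive entries equal. -/
def smirnov (n r : ℕ) : Finset (Fin (n + 1) → ℕ) :=
  (Fintype.piFinset fun _ => Finset.range r).filter fun w =>
    wv w 0 = 0 ∧ wv w n = 0 ∧ ∀ i < n, wv w i ≠ wv w (i + 1)

/-- `k ∈ {1,…,n-1}` is a double ascent of `w` if `w_{k-1} < w_k < w_{k+1}`. -/
def doubleAscent {n : ℕ} (w : Fin (n + 1) → ℕ) (k : ℕ) : Prop :=
  1 ≤ k ∧ k < n ∧ wv w (k - 1) < wv w k ∧ wv w k < wv w (k + 1)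

/-- `k ∈ {1,…,n-1}` is a double descent of `w` if `w_{k-1} > w_k > w_{k+1}`. -/
def doubleDescent {n : ℕ} (w : Fin (n + 1) → ℕ) (k : ℕ) : Prop :=
  1 ≤ k ∧ k < n ∧ wv w k < wv w (k - 1) ∧ wv w (k + 1) < wv w k

/-- `w` has the matching property: for every double ascent `k` of `w` there is a double
descent `ℓ > k` with `w_k = w_ℓ` and `w_k ≤ w_j` for all `k < j < ℓ`. -/
def hasMatching {n : ℕ} (w : Fin (n + 1) → ℕ) : Prop :=
  ∀ k, doubleAscent w k →
    ∃ l, k < l ∧ doubleDescent w l ∧ wv w k = wv w l ∧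
      ∀ j, k < j → j < l → wv w k ≤ wv w j

/-!
`(X + ⋯ + X^{r-1})^n` is the sum of `X^{p_0 + ⋯ + p_{n-1}}` over step sequences `p ∈ {1,…,r-1}^n`.
Reading the steps as cyclic descents `w_i - w_{i+1} ≡ p_i (mod r)` from `w_0 = 0` gives a word
with letters in `{0,…,r-1}` and no two equal neighbours. Each step satisfies
`p_i + w_{i+1} = w_i + r·[w_i < w_{i+1}]`, so telescoping gives `∑ p_i + w_n = r · asc w`: the word
closes at `w_n = 0` exactly when `∑ p_i = r k` with `k = asc w`. This is a bijection between
the step sequences of sum `r k` and the words of `S(n,r)` with `k` ascents.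
-/

open Finset Polynomial

theorem Polynomial.coeff_sum_X_pow_pow {R : Type*} [CommSemiring R] (s : Finset ℕ) (n m : ℕ) :
    ((∑ j ∈ s, (X : R[X]) ^ j) ^ n).coeff m =
      #{p ∈ Fintype.piFinset fun _ : Fin n => s | ∑ i, p i = m} := by
  rw [← Fin.prod_const, prod_univ_sum, finsetSum_coeff]
  simp only [prod_pow_eq_pow_sum, coeff_X_pow, eq_comm (a := m)]
  rw [sum_boole]

section Steps

variable {r a b d : ℕ}

theorem add_eq_add_ite_of_add_modEq (ha : a < r) (hb : b < r) (hd : d < r)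
    (h : b + d ≡ a [MOD r]) : b + d = a + if a < b then r else 0 := by
  have hdiv := Nat.div_add_mod (b + d) r
  rw [h, Nat.mod_eq_of_lt ha] at hdiv
  have hq : (b + d) / r < 2 := Nat.lt_of_mul_lt_mul_left (a := r) (by omega)
  interval_cases (b + d) / r <;> split_ifs <;> omega

theorem ne_iff_pos_of_add_modEq (ha : a < r) (hb : b < r) (hd : d < r)
    (h : b + d ≡ a [MOD r]) : a ≠ b ↔ 0 < d := by
  have := add_eq_add_ite_of_add_modEq ha hb hd h
  split_ifs at this <;> omega

theorem add_add_sub_mod_modEq (hb : b ≤ r) : b + (a + r - b) % r ≡ a [MOD r] :=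
  calc b + (a + r - b) % r ≡ b + (a + r - b) [MOD r] := (Nat.mod_modEq _ _).add_left b
    _ = a + r := by omega
    _ ≡ a [MOD r] := Nat.add_modEq_right

theorem add_sub_mod_eq_of_add_modEq (hb : b ≤ r) (hd : d < r) (h : b + d ≡ a [MOD r]) :
    (a + r - b) % r = d := by
  have := ((add_add_sub_mod_modEq (a := a) hb).trans h.symm).add_left_cancel' b
  rwa [Nat.ModEq, Nat.mod_mod, Nat.mod_eq_of_lt hd] at this

end Steps

theorem sum_add_eq_add_mul_card_ascents {r m : ℕ} {w d : ℕ → ℕ} (hw : ∀ i ≤ m, w i < r)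
    (hd : ∀ i < m, d i < r) (hstep : ∀ i < m, w (i + 1) + d i ≡ w i [MOD r]) :
    ∑ i ∈ range m, d i + w m = w 0 + r * #{i ∈ range m | w i < w (i + 1)} := by
  induction m with
  | zero => simp
  | succ m ih =>
    have ih := ih (fun i hi => hw i (by omega)) (fun i hi => hd i (by omega))
      (fun i hi => hstep i (by omega))
    have hlast := add_eq_add_ite_of_add_modEq (hw m (by omega)) (hw (m + 1) le_rfl)
      (hd m (by omega)) (hstep m (by omega))
    rw [card_filter] at ih ⊢
    rw [sum_range_succ, sum_range_succ, mul_add]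
    split_ifs at hlast ⊢ <;> omega

theorem wv_val {n : ℕ} (w : Fin (n + 1) → ℕ) (i : Fin (n + 1)) : wv w i = w i := by
  simp [wv, i.isLt]

theorem wv_lt_of_mem_smirnov {n r : ℕ} {w : Fin (n + 1) → ℕ} (hw : w ∈ smirnov n r) {i : ℕ}
    (hi : i ≤ n) : wv w i < r := by
  have := Fintype.mem_piFinset.mp (mem_filter.mp hw).1 ⟨i, by omega⟩
  rwa [mem_range, ← wv_val w] at this

theorem extend_val_apply {n : ℕ} (p : Fin n → ℕ) (i : Fin n) :
    Function.extend Fin.val p 0 i = p i :=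
  Fin.val_injective.extend_apply ..

theorem sum_range_extend_val {n : ℕ} (p : Fin n → ℕ) :
    ∑ j ∈ range n, Function.extend Fin.val p 0 j = ∑ i, p i := by
  simp only [← Fin.sum_univ_eq_sum_range, extend_val_apply]

theorem sum_add_wv_eq_add_mul_asc {n r : ℕ} {w : Fin (n + 1) → ℕ} {p : Fin n → ℕ}
    (hw : ∀ i ≤ n, wv w i < r) (hp : ∀ i, p i < r)
    (hstep : ∀ i < n, wv w (i + 1) + Function.extend Fin.val p 0 i ≡ wv w i [MOD r]) :
    ∑ i, p i + wv w n = wv w 0 + r * asc w := by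
  rw [← sum_range_extend_val]
  exact sum_add_eq_add_mul_card_ascents hw (fun i hi => extend_val_apply p ⟨i, hi⟩ ▸ hp _) hstep

namespace Smirnov

variable {n r : ℕ}

/-- `w_i ≡ -(p_0 + ⋯ + p_{i-1}) (mod r)`, the factor `r - 1` standing for `-1`. -/
def wordOfSteps (r : ℕ) (p : Fin n → ℕ) : Fin (n + 1) → ℕ :=
  fun i => ((r - 1) * ∑ j ∈ range i, Function.extend Fin.val p 0 j) % r

def stepsOfWord (r : ℕ) (w : Fin (n + 1) → ℕ) : Fin n → ℕ :=
  fun i => (wv w i + r - wv w (i + 1)) % r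

theorem wv_wordOfSteps (p : Fin n → ℕ) {i : ℕ} (hi : i ≤ n) :
    wv (wordOfSteps r p) i = ((r - 1) * ∑ j ∈ range i, Function.extend Fin.val p 0 j) % r := by
  simp [wv, wordOfSteps, Nat.lt_succ_of_le hi]

theorem wv_wordOfSteps_zero (p : Fin n → ℕ) : wv (wordOfSteps r p) 0 = 0 := by
  simp [wv_wordOfSteps p (Nat.zero_le n)]

theorem wv_wordOfSteps_lt (hr : 0 < r) (p : Fin n → ℕ) (i : ℕ) : wv (wordOfSteps r p) i < r := by
  unfold wv wordOfSteps
  split_ifs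
  exacts [Nat.mod_lt _ hr, hr]

theorem wordOfSteps_step (hr : 0 < r) (p : Fin n → ℕ) {i : ℕ} (hi : i < n) :
    wv (wordOfSteps r p) (i + 1) + Function.extend Fin.val p 0 i ≡
      wv (wordOfSteps r p) i [MOD r] := by
  set S := ∑ j ∈ range i, Function.extend Fin.val p 0 j
  set x := Function.extend Fin.val p 0 i
  rw [wv_wordOfSteps p hi, wv_wordOfSteps p (by omega), sum_range_succ]
  calc (r - 1) * (S + x) % r + x ≡ (r - 1) * (S + x) + x [MOD r] :=
        (Nat.mod_modEq _ _).add_right x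
    _ = (r - 1) * S + r * x := by
        rw [mul_add, add_assoc, ← add_one_mul (r - 1) x, Nat.sub_one_add_one hr.ne']
    _ ≡ (r - 1) * S [MOD r] := Nat.add_mul_mod_self_left _ _ _
    _ ≡ (r - 1) * S % r [MOD r] := (Nat.mod_modEq _ _).symm

theorem wordOfSteps_mem_smirnov (hr : 0 < r) {p : Fin n → ℕ} (hp : ∀ i, p i ∈ Ico 1 r)
    (hsum : r ∣ ∑ i, p i) : wordOfSteps r p ∈ smirnov n r := by
  refine mem_filter.mpr ⟨Fintype.mem_piFinset.mpr fun i => ?_, ?_, ?_, fun i hi => ?_⟩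
  · rw [mem_range, ← wv_val (wordOfSteps r p)]
    exact wv_wordOfSteps_lt hr p i
  · exact wv_wordOfSteps_zero p
  · rw [wv_wordOfSteps p le_rfl, sum_range_extend_val]
    exact Nat.mod_eq_zero_of_dvd (hsum.mul_left _)
  · have hpi := mem_Ico.mp (hp ⟨i, hi⟩)
    rw [← extend_val_apply p] at hpi
    exact (ne_iff_pos_of_add_modEq (wv_wordOfSteps_lt hr p _) (wv_wordOfSteps_lt hr p _)
      hpi.2 (wordOfSteps_step hr p hi)).mpr hpi.1

theorem mul_asc_wordOfSteps (hr : 0 < r) {p : Fin n → ℕ} (hp : ∀ i, p i < r) :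
    r * asc (wordOfSteps r p) = ∑ i, p i + wv (wordOfSteps r p) n := by
  have := sum_add_wv_eq_add_mul_asc (fun i _ => wv_wordOfSteps_lt hr p i) hp
    (fun i hi => wordOfSteps_step hr p hi)
  rw [this, wv_wordOfSteps_zero, zero_add]

theorem stepsOfWord_wordOfSteps (hr : 0 < r) {p : Fin n → ℕ} (hp : ∀ i, p i < r) :
    stepsOfWord r (wordOfSteps r p) = p := by
  funext i
  have hstep := wordOfSteps_step hr p i.isLt
  rw [extend_val_apply] at hstep
  exact add_sub_mod_eq_of_add_modEq (wv_wordOfSteps_lt hr p _).le (hp i) hstep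

variable {w : Fin (n + 1) → ℕ}

theorem stepsOfWord_step (hw : ∀ i ≤ n, wv w i < r) {i : ℕ} (hi : i < n) :
    wv w (i + 1) + Function.extend Fin.val (stepsOfWord r w) 0 i ≡ wv w i [MOD r] := by
  rw [extend_val_apply _ ⟨i, hi⟩]
  exact add_add_sub_mod_modEq (hw (i + 1) hi).le

theorem stepsOfWord_mem_Ico (hr : 0 < r) (hw : w ∈ smirnov n r) (i : Fin n) :
    stepsOfWord r w i ∈ Ico 1 r := by
  have hlt : stepsOfWord r w i < r := Nat.mod_lt _ hr
  have hstep := stepsOfWord_step (fun j hj => wv_lt_of_mem_smirnov hw hj) i.isLt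
  rw [extend_val_apply] at hstep
  have hne := (mem_filter.mp hw).2.2.2 i i.isLt
  exact mem_Ico.mpr ⟨(ne_iff_pos_of_add_modEq (wv_lt_of_mem_smirnov hw i.isLt.le)
    (wv_lt_of_mem_smirnov hw i.isLt) hlt hstep).mp hne, hlt⟩

theorem sum_stepsOfWord (hr : 0 < r) (hw : w ∈ smirnov n r) :
    ∑ i, stepsOfWord r w i = r * asc w := by
  have hlt (j : ℕ) (hj : j ≤ n) := wv_lt_of_mem_smirnov hw hj
  have := sum_add_wv_eq_add_mul_asc hlt (fun i => Nat.mod_lt _ hr)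
    (fun i hi => stepsOfWord_step hlt hi)
  obtain ⟨-, hw0, hwn, -⟩ := mem_filter.mp hw
  rwa [hw0, hwn, add_zero, zero_add] at this

theorem wordOfSteps_stepsOfWord (hr : 0 < r) (hw : w ∈ smirnov n r) :
    wordOfSteps r (stepsOfWord r w) = w := by
  have hlt (j : ℕ) (hj : j ≤ n) := wv_lt_of_mem_smirnov hw hj
  suffices h : ∀ i ≤ n, wv (wordOfSteps r (stepsOfWord r w)) i = wv w i by
    funext i
    simpa only [wv_val] using h i (Nat.lt_succ_iff.mp i.isLt)
  intro i hi
  induction i with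
  | zero => rw [wv_wordOfSteps_zero, (mem_filter.mp hw).2.1]
  | succ i ih =>
    have hstep := (wordOfSteps_step hr (stepsOfWord r w) hi).trans
      ((ih (by omega)).symm ▸ (stepsOfWord_step hlt hi).symm)
    exact (hstep.add_right_cancel' _).eq_of_lt_of_lt (wv_wordOfSteps_lt hr _ _) (hlt _ hi)

theorem card_steps_eq_card_smirnov (hr : 0 < r) (k : ℕ) :
    #{p ∈ Fintype.piFinset fun _ : Fin n => Ico 1 r | ∑ i, p i = r * k} =
      #{w ∈ smirnov n r | asc w = k} := by
  refine card_nbij' (wordOfSteps r) (stepsOfWord r) ?_ ?_ ?_ ?_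
  · intro p hp
    simp only [coe_filter, Set.mem_ofPred_eq, Fintype.mem_piFinset] at hp ⊢
    obtain ⟨hp, hsum⟩ := hp
    have hmem := wordOfSteps_mem_smirnov hr hp ⟨k, hsum⟩
    have hasc := mul_asc_wordOfSteps hr fun i => (mem_Ico.mp (hp i)).2
    rw [(mem_filter.mp hmem).2.2.1, hsum, add_zero] at hasc
    exact ⟨hmem, Nat.eq_of_mul_eq_mul_left hr hasc⟩
  · intro w hw
    simp only [coe_filter, Set.mem_ofPred_eq, Fintype.mem_piFinset] at hw ⊢
    exact ⟨stepsOfWord_mem_Ico hr hw.1, hw.2 ▸ sum_stepsOfWord hr hw.1⟩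
  · intro p hp
    simp only [coe_filter, Set.mem_ofPred_eq, Fintype.mem_piFinset] at hp
    exact stepsOfWord_wordOfSteps hr fun i => (mem_Ico.mp (hp.1 i)).2
  · intro w hw
    exact wordOfSteps_stepsOfWord hr (mem_filter.mp hw).1

end Smirnov

open Smirnov in
theorem coeff_pow_eq_card_smirnov_general (n r : ℕ) (hr : 0 < r) (k : ℕ) :
    ((∑ j ∈ Finset.Ico 1 r, (Polynomial.X : Polynomial ℤ) ^ j) ^ n).coeff (r * k) =
      (((smirnov n r).filter fun w => asc w = k).card : ℤ) := by
  rw [Polynomial.coeff_sum_X_pow_pow, card_steps_eq_card_smirnov hr]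

/-- The coefficient of `X^{rk}` in `(X + X² + ⋯ + X^{r-1})^n ∈ ℤ[X]` equals the number
of Smirnov words `w ∈ S(n,r)` with exactly `k` ascents. -/
theorem coeff_pow_eq_card_smirnov (n r : ℕ) (hn : 0 < n) (hr : 0 < r) (k : ℕ) :
    ((∑ j ∈ Finset.Ico 1 r, (Polynomial.X : Polynomial ℤ) ^ j) ^ n).coeff (r * k) =
      (((smirnov n r).filter fun w => asc w = k).card : ℤ) :=
  coeff_pow_eq_card_smirnov_general n r hr k
end
end

section
/- Let n and r be positive integers. If n is even, then Σ_{w ∈ S(n,r)} (−1)^{asc(w)} = (−1)^{n/2} · ξ_{n,r,n/2}, where ξ_{n,r,n/2} is the number of words w ∈ S(n,r) with exactly n/2 ascents that have the matching property. If n is odd, then Σ_{w ∈ S(n,r)} (−1)^{asc(w)} = 0. -/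
open scoped Classical

noncomputable section

-- ########## auxiliary theory ##########


namespace SmAux

/-- Smirnov-word facts for the value function `f = wv w`. -/
structure SWf (n r : ℕ) (f : ℕ → ℕ) : Prop where
  z : f 0 = 0
  lastz : f n = 0
  ne : ∀ i, i < n → f i ≠ f (i + 1)
  ltr : ∀ i, f i < r
  big : ∀ i, n < i → f i = 0

def fdrop (f : ℕ → ℕ) (k : ℕ) : ℕ := sInf {j | k < j ∧ f j < f k}

def lrise (f : ℕ → ℕ) (k : ℕ) : ℕ := sSup {j | j < k ∧ f j < f k}

def isDA (n : ℕ) (f : ℕ → ℕ) (k : ℕ) : Prop :=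
  1 ≤ k ∧ k < n ∧ f (k - 1) < f k ∧ f k < f (k + 1)

def isDD (n : ℕ) (f : ℕ → ℕ) (k : ℕ) : Prop :=
  1 ≤ k ∧ k < n ∧ f k < f (k - 1) ∧ f (k + 1) < f k

def mDA (f : ℕ → ℕ) (k : ℕ) : Prop := f (fdrop f k - 1) = f k

def mDD (f : ℕ → ℕ) (k : ℕ) : Prop := f (lrise f k + 1) = f k

def unm (n : ℕ) (f : ℕ → ℕ) (k : ℕ) : Prop :=
  (isDA n f k ∧ ¬ mDA f k) ∨ (isDD n f k ∧ ¬ mDD f k)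

def Fixedf (n : ℕ) (f : ℕ → ℕ) : Prop := ∀ k, ¬ unm n f k

def USet (n : ℕ) (f : ℕ → ℕ) : Finset ℕ := (Finset.range (n + 1)).filter (unm n f)

lemma unm_lt_n {n : ℕ} {f : ℕ → ℕ} {k : ℕ} (h : unm n f k) : k < n := by
  rcases h with ⟨h, -⟩ | ⟨h, -⟩ <;> exact h.2.1

lemma mem_USet {n : ℕ} {f : ℕ → ℕ} {k : ℕ} (h : unm n f k) : k ∈ USet n f := by
  simp only [USet, Finset.mem_filter, Finset.mem_range]
  exact ⟨Nat.lt_succ_of_lt (unm_lt_n h), h⟩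

/-- selected position: leftmost unmatched item of minimal value. -/
def sel (n : ℕ) (f : ℕ → ℕ) : ℕ :=
  if h : (USet n f).Nonempty then
    ((USet n f).filter fun k => f k = ((USet n f).image f).min' (h.image f)).min'
      (by
        obtain ⟨k, hk, hfk⟩ := Finset.mem_image.1 (((USet n f).image f).min'_mem (h.image f))
        exact ⟨k, Finset.mem_filter.2 ⟨hk, hfk⟩⟩)
  else 0

lemma sel_spec {n : ℕ} {f : ℕ → ℕ} (h : (USet n f).Nonempty) :
    unm n f (sel n f) ∧ (∀ j, unm n f j → f (sel n f) ≤ f j) ∧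
      (∀ j, unm n f j → f j = f (sel n f) → sel n f ≤ j) := by
  have hmm := ((USet n f).image f).min'_mem (h.image f)
  set v := ((USet n f).image f).min' (h.image f) with hv
  rw [sel, dif_pos h]
  set s := (USet n f).filter fun k => f k = v with hs
  have hne : s.Nonempty := by
    obtain ⟨k, hk, hfk⟩ := Finset.mem_image.1 hmm
    exact ⟨k, Finset.mem_filter.2 ⟨hk, hfk⟩⟩
  have hsel := s.min'_mem hne
  rw [Finset.mem_filter] at hsel
  refine ⟨(Finset.mem_filter.1 hsel.1).2, ?_, ?_⟩
  · intro j hj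
    rw [hsel.2]
    exact Finset.min'_le _ _ (Finset.mem_image_of_mem f (mem_USet hj))
  · intro j hj hfj
    refine Finset.min'_le _ _ (Finset.mem_filter.2 ⟨mem_USet hj, ?_⟩)
    rw [hfj]; exact hsel.2

lemma sel_eq {n : ℕ} {f : ℕ → ℕ} {q : ℕ} (h1 : unm n f q)
    (h2 : ∀ j, unm n f j → f q ≤ f j)
    (h3 : ∀ j, unm n f j → f j = f q → q ≤ j) : sel n f = q := by
  have hne : (USet n f).Nonempty := ⟨q, mem_USet h1⟩
  obtain ⟨u1, u2, u3⟩ := sel_spec hne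
  have hval : f (sel n f) = f q := le_antisymm (u2 q h1) (h2 _ u1)
  exact le_antisymm (u3 q h1 hval.symm) (h3 _ u1 hval)

lemma sInf_eq' {s : Set ℕ} {a : ℕ} (ha : a ∈ s) (h : ∀ b ∈ s, a ≤ b) : sInf s = a :=
  le_antisymm (Nat.sInf_le ha) (h _ (Nat.sInf_mem ⟨a, ha⟩))

lemma sSup_eq' {s : Set ℕ} {a : ℕ} (ha : a ∈ s) (h : ∀ b ∈ s, b ≤ a) : sSup s = a :=
  le_antisymm (Nat.sSup_mem ⟨a, ha⟩ ⟨a, fun x hx => h x hx⟩ |> h _)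
    (le_csSup ⟨a, fun x hx => h x hx⟩ ha)

lemma fdrop_eq_of {f : ℕ → ℕ} {k t : ℕ} (ht : k < t) (hlt : f t < f k)
    (hmin : ∀ j, k < j → j < t → ¬ f j < f k) : fdrop f k = t := by
  refine sInf_eq' ⟨ht, hlt⟩ ?_
  rintro b ⟨hb1, hb2⟩
  by_contra hb
  exact hmin b hb1 (by omega) hb2

lemma lrise_eq_of {f : ℕ → ℕ} {k t : ℕ} (ht : t < k) (hlt : f t < f k)
    (hmax : ∀ j, t < j → j < k → ¬ f j < f k) : lrise f k = t := by
  refine sSup_eq' ⟨ht, hlt⟩ ?_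
  rintro b ⟨hb1, hb2⟩
  by_contra hb
  exact hmax b (by omega) hb1 hb2

end SmAux

namespace SmAux

def ascf (n : ℕ) (f : ℕ → ℕ) : ℕ := ((Finset.range n).filter fun i => f i < f (i + 1)).card

def descf (n : ℕ) (f : ℕ → ℕ) : ℕ := ((Finset.range n).filter fun i => f (i + 1) < f i).card

variable {n r : ℕ} {f : ℕ → ℕ}

lemma pos_of_lt {a b : ℕ} (h : a < b) : 0 < b := Nat.pos_of_ne_zero (by omega)

lemma ascf_add_descf (hf : SWf n r f) : ascf n f + descf n f = n := by
  have h := Finset.card_filter_add_card_filter_not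
    (s := Finset.range n) (p := fun i => f i < f (i + 1))
  rw [Finset.card_range] at h
  have h2 : (Finset.range n).filter (fun i => ¬ f i < f (i + 1)) =
      (Finset.range n).filter (fun i => f (i + 1) < f i) := by
    apply Finset.filter_congr
    intro i hi
    have := hf.ne i (Finset.mem_range.1 hi)
    constructor <;> intro <;> omega
  rw [h2] at h
  exact h

lemma ascf_eq_left (hf : SWf n r f) :
    ascf n f = ((Finset.Ico 1 n).filter fun k => f (k - 1) < f k).card := by
  unfold ascf
  refine Finset.card_bij' (fun i _ => i + 1) (fun k _ => k - 1) ?hi ?hj ?left ?right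
  case hi =>
    intro i hi
    simp only [Finset.mem_filter, Finset.mem_range] at hi
    have hin : i + 1 ≠ n := by
      intro h
      rw [h, hf.lastz] at hi
      omega
    simp only [Finset.mem_filter, Finset.mem_Ico]
    refine ⟨⟨by omega, by omega⟩, by simpa using hi.2⟩
  case hj =>
    intro k hk
    simp only [Finset.mem_filter, Finset.mem_Ico] at hk
    have hk1 : k - 1 + 1 = k := by omega
    simp only [Finset.mem_filter, Finset.mem_range, hk1]
    exact ⟨by omega, hk.2⟩
  case left => intro i hi; simp
  case right =>
    intro k hk
    simp only [Finset.mem_filter, Finset.mem_Ico] at hk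
    show k - 1 + 1 = k
    omega

lemma descf_eq_left (hf : SWf n r f) :
    descf n f = ((Finset.Ico 1 n).filter fun k => f (k + 1) < f k).card := by
  unfold descf
  congr 1
  apply Finset.ext
  intro i
  simp only [Finset.mem_filter, Finset.mem_range, Finset.mem_Ico]
  constructor
  · rintro ⟨h1, h2⟩
    refine ⟨⟨?_, h1⟩, h2⟩
    rcases Nat.eq_zero_or_pos i with h | h
    · rw [h, hf.z] at h2; omega
    · omega
  · rintro ⟨⟨-, h1⟩, h2⟩
    exact ⟨h1, h2⟩

def DAs (n : ℕ) (f : ℕ → ℕ) : Finset ℕ := (Finset.Ico 1 n).filter (isDA n f)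
def DDs (n : ℕ) (f : ℕ → ℕ) : Finset ℕ := (Finset.Ico 1 n).filter (isDD n f)
def PKs (n : ℕ) (f : ℕ → ℕ) : Finset ℕ :=
  (Finset.Ico 1 n).filter fun k => f (k - 1) < f k ∧ f (k + 1) < f k

lemma left_split (hf : SWf n r f) :
    ((Finset.Ico 1 n).filter fun k => f (k - 1) < f k).card
      = (DAs n f).card + (PKs n f).card := by
  have h := Finset.card_filter_add_card_filter_not
    (s := (Finset.Ico 1 n).filter fun k => f (k - 1) < f k) (p := fun k => f k < f (k + 1))
  rw [Finset.filter_filter, Finset.filter_filter] at h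
  rw [← h]
  congr 1
  · congr 1
    apply Finset.filter_congr
    intro k hk
    simp only [Finset.mem_Ico] at hk
    simp only [isDA]
    constructor
    · rintro ⟨h1, h2⟩; exact ⟨by omega, by omega, h1, h2⟩
    · rintro ⟨-, -, h1, h2⟩; exact ⟨h1, h2⟩
  · congr 1
    apply Finset.filter_congr
    intro k hk
    simp only [Finset.mem_Ico] at hk
    have := hf.ne k hk.2
    constructor
    · rintro ⟨h1, h2⟩; exact ⟨h1, by omega⟩
    · rintro ⟨h1, h2⟩; exact ⟨h1, by omega⟩

lemma right_split (hf : SWf n r f) :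
    ((Finset.Ico 1 n).filter fun k => f (k + 1) < f k).card
      = (DDs n f).card + (PKs n f).card := by
  have h := Finset.card_filter_add_card_filter_not
    (s := (Finset.Ico 1 n).filter fun k => f (k + 1) < f k) (p := fun k => f k < f (k - 1))
  rw [Finset.filter_filter, Finset.filter_filter] at h
  rw [← h]
  congr 1
  · congr 1
    apply Finset.filter_congr
    intro k hk
    simp only [Finset.mem_Ico] at hk
    simp only [isDD]
    constructor
    · rintro ⟨h1, h2⟩; exact ⟨by omega, by omega, h2, h1⟩
    · rintro ⟨-, -, h1, h2⟩; exact ⟨h2, h1⟩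
  · congr 1
    apply Finset.filter_congr
    intro k hk
    simp only [Finset.mem_Ico] at hk
    have hne : f (k - 1) ≠ f k := by
      have h1 : k - 1 + 1 = k := by omega
      have := hf.ne (k - 1) (by omega)
      rwa [h1] at this
    constructor
    · rintro ⟨h1, h2⟩; exact ⟨by omega, h1⟩
    · rintro ⟨h1, h2⟩; exact ⟨h2, by omega⟩

end SmAux

namespace SmAux

variable {n r : ℕ} {f : ℕ → ℕ}

lemma fd_facts (hf : SWf n r f) {k : ℕ} (hk : isDA n f k) :
    k < fdrop f k ∧ k + 2 ≤ fdrop f k ∧ fdrop f k ≤ n ∧ f (fdrop f k) < f k ∧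
      ∀ j, k < j → j < fdrop f k → f k ≤ f j := by
  obtain ⟨hk1, hkn, hprev, hnext⟩ := hk
  have hmemn : n ∈ {j | k < j ∧ f j < f k} := ⟨hkn, by rw [hf.lastz]; omega⟩
  have hmem : k < fdrop f k ∧ f (fdrop f k) < f k :=
    Nat.sInf_mem (⟨n, hmemn⟩ : {j | k < j ∧ f j < f k}.Nonempty)
  have hle : fdrop f k ≤ n := Nat.sInf_le hmemn
  have hint : ∀ j, k < j → j < fdrop f k → f k ≤ f j := by
    intro j hj1 hj2
    have := Nat.notMem_of_lt_sInf (s := {j | k < j ∧ f j < f k}) hj2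
    simp only [Set.mem_setOf_eq, not_and, not_lt] at this
    exact this hj1
  have hne : fdrop f k ≠ k + 1 := by
    intro h
    have h2 := hmem.2
    rw [h] at h2
    omega
  exact ⟨hmem.1, by omega, hle, hmem.2, hint⟩

lemma lr_facts (hf : SWf n r f) {l : ℕ} (hl : isDD n f l) :
    lrise f l < l ∧ lrise f l + 2 ≤ l ∧ f (lrise f l) < f l ∧
      ∀ j, lrise f l < j → j < l → f l ≤ f j := by
  obtain ⟨hl1, hln, hprev, hnext⟩ := hl
  have h0 : (0 : ℕ) ∈ {j | j < l ∧ f j < f l} := ⟨by omega, by rw [hf.z]; omega⟩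
  have hbdd : BddAbove {j | j < l ∧ f j < f l} := ⟨l, fun x hx => le_of_lt hx.1⟩
  have hmem : lrise f l < l ∧ f (lrise f l) < f l := Nat.sSup_mem ⟨0, h0⟩ hbdd
  have hint : ∀ j, lrise f l < j → j < l → f l ≤ f j := by
    intro j hj1 hj2
    by_contra hc
    have : j ≤ lrise f l := le_csSup hbdd ⟨hj2, by omega⟩
    omega
  have hprev' : f l < f (l - 1) := by
    have := hf.ne (l - 1) (by omega)
    have he : l - 1 + 1 = l := by omega
    rw [he] at this
    rcases Nat.eq_or_lt_of_le (Nat.one_le_iff_ne_zero.2 (by omega) : 1 ≤ l) with h | h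
    · exact hprev
    · exact hprev
  have hne : lrise f l ≠ l - 1 := by
    intro h
    have h2 := hmem.2
    rw [h] at h2
    omega
  exact ⟨hmem.1, by omega, hmem.2, hint⟩

/-- a matched double ascent yields a matched double descent at `fdrop - 1`. -/
lemma Lma (hf : SWf n r f) {k : ℕ} (hk : isDA n f k) (hm : mDA f k) :
    isDD n f (fdrop f k - 1) ∧ mDD f (fdrop f k - 1) ∧
      lrise f (fdrop f k - 1) = k - 1 ∧ f (fdrop f k - 1) = f k := by
  obtain ⟨h1, h2, h3, h4, h5⟩ := fd_facts hf hk
  set m := fdrop f k with hmdef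
  rw [mDA, ← hmdef] at hm
  have hk1 : 1 ≤ k := hk.1
  have hnext : f k < f (k + 1) := hk.2.2.2
  have hprev : f (k - 1) < f k := hk.2.2.1
  have hm3 : k + 3 ≤ m := by
    rcases Nat.lt_or_ge (k + 2) m with h | h
    · omega
    · exfalso
      have hm1 : m - 1 = k + 1 := by omega
      rw [hm1] at hm
      omega
  have hm2 : f k < f (m - 2) := by
    have hge : f k ≤ f (m - 2) := h5 (m - 2) (by omega) (by omega)
    have hne : f (m - 2) ≠ f (m - 1) := by
      have := hf.ne (m - 2) (by omega)
      have he : m - 2 + 1 = m - 1 := by omega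
      rwa [he] at this
    omega
  have hDD : isDD n f (m - 1) := by
    refine ⟨by omega, by omega, ?_, ?_⟩
    · have he : m - 1 - 1 = m - 2 := by omega
      rw [he, hm]
      exact hm2
    · have he : m - 1 + 1 = m := by omega
      rw [he, hm]
      exact h4
  have hlr : lrise f (m - 1) = k - 1 := by
    apply lrise_eq_of (by omega)
    · rw [hm]; exact hprev
    · intro j hj1 hj2 hc
      rw [hm] at hc
      rcases Nat.lt_or_ge j (k + 1) with h | h
      · have hj : j = k := by omega
        rw [hj] at hc; omega
      · have := h5 j (by omega) (by omega)
        omega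
  refine ⟨hDD, ?_, hlr, hm⟩
  rw [mDD, hlr, hm]
  have he : k - 1 + 1 = k := by omega
  rw [he]

/-- a matched double descent yields a matched double ascent at `lrise + 1`. -/
lemma Lmb (hf : SWf n r f) {l : ℕ} (hl : isDD n f l) (hm : mDD f l) :
    isDA n f (lrise f l + 1) ∧ mDA f (lrise f l + 1) ∧
      fdrop f (lrise f l + 1) = l + 1 ∧ f (lrise f l + 1) = f l := by
  obtain ⟨h1, h2, h3, h4⟩ := lr_facts hf hl
  set p := lrise f l with hpdef
  rw [mDD, ← hpdef] at hm
  have hnext : f (l + 1) < f l := hl.2.2.2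
  have hln : l < n := hl.2.1
  have hprev' : f l < f (l - 1) := by
    have hge : f l ≤ f (l - 1) := h4 (l - 1) (by omega) (by omega)
    have hne : f (l - 1) ≠ f l := by
      have := hf.ne (l - 1) (by omega)
      have he : l - 1 + 1 = l := by omega
      rwa [he] at this
    omega
  have hp3 : p + 3 ≤ l := by
    rcases Nat.lt_or_ge (p + 2) l with h | h
    · omega
    · exfalso
      have hp1 : p + 1 = l - 1 := by omega
      rw [hp1] at hm
      omega
  have hp2 : f l < f (p + 2) := by
    have hge : f l ≤ f (p + 2) := h4 (p + 2) (by omega) (by omega)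
    have hne : f (p + 1) ≠ f (p + 2) := hf.ne (p + 1) (by omega)
    omega
  have hDA : isDA n f (p + 1) := by
    refine ⟨by omega, by omega, ?_, ?_⟩
    · simp only [Nat.add_sub_cancel]
      rw [hm]; exact h3
    · rw [hm]; exact hp2
  have hfd : fdrop f (p + 1) = l + 1 := by
    apply fdrop_eq_of (by omega)
    · rw [hm]; exact hnext
    · intro j hj1 hj2 hc
      rw [hm] at hc
      rcases Nat.lt_or_ge j l with h | h
      · have := h4 j (by omega) (by omega)
        omega
      · have hj : j = l := by omega
        rw [hj] at hc; omega
  refine ⟨hDA, ?_, hfd, hm⟩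
  rw [mDA, hfd, hm]
  simp only [Nat.add_sub_cancel]

end SmAux

namespace SmAux

variable {n r : ℕ} {f : ℕ → ℕ}

lemma fixed_all_matched (hfix : Fixedf n f) :
    (∀ k, isDA n f k → mDA f k) ∧ (∀ l, isDD n f l → mDD f l) := by
  constructor
  · intro k hk
    by_contra h
    exact hfix k (Or.inl ⟨hk, h⟩)
  · intro l hl
    by_contra h
    exact hfix l (Or.inr ⟨hl, h⟩)

lemma mem_DAs {k : ℕ} : k ∈ DAs n f ↔ isDA n f k := by
  simp only [DAs, Finset.mem_filter, Finset.mem_Ico]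
  exact ⟨fun h => h.2, fun h => ⟨⟨h.1, h.2.1⟩, h⟩⟩

lemma mem_DDs {l : ℕ} : l ∈ DDs n f ↔ isDD n f l := by
  simp only [DDs, Finset.mem_filter, Finset.mem_Ico]
  exact ⟨fun h => h.2, fun h => ⟨⟨h.1, h.2.1⟩, h⟩⟩

lemma card_DAs_le (hf : SWf n r f) (h1 : ∀ k, isDA n f k → mDA f k) :
    (DAs n f).card ≤ ((Finset.Ico 1 n).filter fun l => isDD n f l ∧ mDD f l).card := by
  apply Finset.card_le_card_of_injOn (fun k => fdrop f k - 1)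
  · intro k hk
    have hDA := mem_DAs.1 hk
    obtain ⟨hDD, hmDD, hlr, hval⟩ := Lma hf hDA (h1 k hDA)
    simp only [Finset.mem_coe, Finset.mem_filter, Finset.mem_Ico]
    exact ⟨⟨hDD.1, hDD.2.1⟩, hDD, hmDD⟩
  · intro k1 hk1 k2 hk2 heq
    have hDA1 := mem_DAs.1 (Finset.mem_coe.1 hk1)
    have hDA2 := mem_DAs.1 (Finset.mem_coe.1 hk2)
    have e1 := (Lma hf hDA1 (h1 k1 hDA1)).2.2.1
    have e2 := (Lma hf hDA2 (h1 k2 hDA2)).2.2.1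
    simp only at heq
    rw [heq] at e1
    rw [e2] at e1
    have := hDA1.1
    have := hDA2.1
    omega

lemma card_DAs_eq (hf : SWf n r f) (h1 : ∀ k, isDA n f k → mDA f k)
    (h2 : ∀ l, isDD n f l → mDD f l) : (DAs n f).card = (DDs n f).card := by
  refine Finset.card_bij' (fun k _ => fdrop f k - 1) (fun l _ => lrise f l + 1)
    ?_ ?_ ?_ ?_
  · intro k hk
    have hDA := mem_DAs.1 hk
    exact mem_DDs.2 (Lma hf hDA (h1 k hDA)).1
  · intro l hl
    have hDD := mem_DDs.1 hl
    exact mem_DAs.2 (Lmb hf hDD (h2 l hDD)).1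
  · intro k hk
    have hDA := mem_DAs.1 hk
    have := (Lma hf hDA (h1 k hDA)).2.2.1
    simp only [this]
    have := hDA.1
    omega
  · intro l hl
    have hDD := mem_DDs.1 hl
    have := (Lmb hf hDD (h2 l hDD)).2.2.1
    simp only [this]
    omega

lemma all_DD_matched_of (hf : SWf n r f) (h1 : ∀ k, isDA n f k → mDA f k)
    (hcard : (DDs n f).card ≤ (DAs n f).card) : ∀ l, isDD n f l → mDD f l := by
  set T := (Finset.Ico 1 n).filter fun l => isDD n f l ∧ mDD f l with hT
  have hsub : T ⊆ DDs n f := by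
    intro l hl
    simp only [hT, Finset.mem_filter] at hl
    exact mem_DDs.2 hl.2.1
  have hle : (DDs n f).card ≤ T.card :=
    le_trans hcard (card_DAs_le hf h1)
  have heq : T = DDs n f := Finset.eq_of_subset_of_card_le hsub hle
  intro l hl
  have : l ∈ T := heq ▸ mem_DDs.2 hl
  simp only [hT, Finset.mem_filter] at this
  exact this.2.2

lemma asc_eq_desc_iff (hf : SWf n r f) :
    (2 * ascf n f = n) ↔ (DAs n f).card = (DDs n f).card := by
  have h1 := ascf_add_descf hf
  have h2 := ascf_eq_left hf
  have h3 := descf_eq_left hf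
  have h4 := left_split hf
  have h5 := right_split hf
  omega

lemma fixed_iff (hf : SWf n r f) :
    Fixedf n f ↔ (2 * ascf n f = n ∧ ∀ k, isDA n f k → mDA f k) := by
  constructor
  · intro hfix
    obtain ⟨h1, h2⟩ := fixed_all_matched hfix
    exact ⟨(asc_eq_desc_iff hf).2 (card_DAs_eq hf h1 h2), h1⟩
  · rintro ⟨hasc, h1⟩
    have h2 := all_DD_matched_of hf h1 (le_of_eq ((asc_eq_desc_iff hf).1 hasc).symm)
    intro k hk
    rcases hk with ⟨hDA, hm⟩ | ⟨hDD, hm⟩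
    · exact hm (h1 k hDA)
    · exact hm (h2 k hDD)

lemma mDA_iff_matching (hf : SWf n r f) {k : ℕ} (hk : isDA n f k) :
    mDA f k ↔ ∃ l, k < l ∧ isDD n f l ∧ f k = f l ∧ ∀ j, k < j → j < l → f k ≤ f j := by
  constructor
  · intro hm
    obtain ⟨hDD, hmDD, hlr, hval⟩ := Lma hf hk hm
    obtain ⟨h1, h2, h3, h4, h5⟩ := fd_facts hf hk
    refine ⟨fdrop f k - 1, by omega, hDD, hval.symm, ?_⟩
    intro j hj1 hj2
    exact h5 j hj1 (by omega)
  · rintro ⟨l, hkl, hDD, hval, hbet⟩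
    have hfd : fdrop f k = l + 1 := by
      apply fdrop_eq_of (by omega)
      · rw [hval]; exact hDD.2.2.2
      · intro j hj1 hj2 hc
        rcases Nat.lt_or_ge j l with h | h
        · have := hbet j hj1 h
          omega
        · have hj : j = l := by omega
          rw [hj] at hc
          omega
    rw [mDA, hfd]
    simp only [Nat.add_sub_cancel]
    exact hval.symm

end SmAux

namespace SmAux

variable {n r : ℕ} {f g : ℕ → ℕ}

/-- rotate the segment `[k, m-1]` one step left: the value at `k` moves to `m-1`. -/
def rotL (f : ℕ → ℕ) (k m : ℕ) : ℕ → ℕ := fun j =>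
  if k ≤ j ∧ j + 1 < m then f (j + 1) else if k ≤ j ∧ j + 1 = m then f k else f j

/-- rotate the segment `[a, b]` one step right: the value at `b` moves to `a`. -/
def rotR (f : ℕ → ℕ) (a b : ℕ) : ℕ → ℕ := fun j =>
  if j = a then f b else if a < j ∧ j ≤ b then f (j - 1) else f j

lemma rotL_lt {k m j : ℕ} (h : j < k) : rotL f k m j = f j := by
  simp only [rotL]
  rw [if_neg (by omega), if_neg (by omega)]

lemma rotL_ge {k m j : ℕ} (h : m ≤ j) : rotL f k m j = f j := by
  simp only [rotL]
  rw [if_neg (by omega), if_neg (by omega)]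

lemma rotL_blk {k m j : ℕ} (h1 : k ≤ j) (h2 : j + 1 < m) : rotL f k m j = f (j + 1) := by
  simp only [rotL]
  rw [if_pos ⟨h1, h2⟩]

lemma rotL_top {k m : ℕ} (h : k + 1 ≤ m - 1) (hm : 1 ≤ m) : rotL f k m (m - 1) = f k := by
  simp only [rotL]
  rw [if_neg (by omega), if_pos (by omega)]

lemma rotR_lt {a b j : ℕ} (h : j < a) : rotR f a b j = f j := by
  simp only [rotR]
  rw [if_neg (by omega), if_neg (by omega)]

lemma rotR_gt {a b j : ℕ} (h : b < j) (ha : a ≤ b) : rotR f a b j = f j := by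
  simp only [rotR]
  rw [if_neg (by omega), if_neg (by omega)]

lemma rotR_a {a b : ℕ} : rotR f a b a = f b := by
  simp [rotR]

lemma rotR_blk {a b j : ℕ} (h1 : a < j) (h2 : j ≤ b) : rotR f a b j = f (j - 1) := by
  simp only [rotR]
  rw [if_neg (by omega), if_pos ⟨h1, h2⟩]

lemma iff_lt_of {a b c d : ℕ} (h1 : b < a ↔ d < c) (h2 : b = a ↔ d = c) :
    (a < b ↔ c < d) := by
  constructor
  · intro h
    rcases Nat.lt_trichotomy c d with hh | hh | hh
    · exact hh
    · exact absurd (h2.2 hh.symm) (by omega)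
    · exact absurd (h1.2 hh) (by omega)
  · intro h
    rcases Nat.lt_trichotomy a b with hh | hh | hh
    · exact hh
    · exact absurd (h2.1 hh.symm) (by omega)
    · exact absurd (h1.1 hh) (by omega)

/-- statuses at a position only depend on the comparison profile against the level. -/
lemma unm_congr {k : ℕ} (hk : f k = g k)
    (hlt : ∀ j, f j < f k ↔ g j < g k) (heq : ∀ j, f j = f k ↔ g j = g k) :
    unm n f k ↔ unm n g k := by
  have hfd : fdrop f k = fdrop g k := by
    unfold fdrop
    congr 1
    ext j
    exact and_congr_right fun _ => hlt j
  have hlr : lrise f k = lrise g k := by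
    unfold lrise
    congr 1
    ext j
    exact and_congr_right fun _ => hlt j
  have hDA : isDA n f k ↔ isDA n g k := by
    unfold isDA
    rw [hlt (k - 1)]
    rw [iff_lt_of (hlt (k+1)) (heq (k+1))]
  have hDD : isDD n f k ↔ isDD n g k := by
    unfold isDD
    rw [hlt (k + 1)]
    rw [iff_lt_of (hlt (k-1)) (heq (k-1))]
  have hmDA : mDA f k ↔ mDA g k := by
    unfold mDA
    rw [hfd, heq (fdrop g k - 1)]
  have hmDD : mDD f k ↔ mDD g k := by
    unfold mDD
    rw [hlr, heq (lrise g k + 1)]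
  unfold unm
  rw [hDA, hDD, hmDA, hmDD]

end SmAux

namespace SmAux

/-- context for the left rotation (hop of an unmatched double ascent at `k`,
with `m` the first drop position). -/
structure Ctx (n r : ℕ) (f : ℕ → ℕ) (k m : ℕ) : Prop where
  sw : SWf n r f
  hk1 : 1 ≤ k
  hkm : k + 2 ≤ m
  hmn : m ≤ n
  hprev : f (k - 1) < f k
  hnext : f k < f (k + 1)
  hint : ∀ j, k < j → j < m → f k ≤ f j
  hdrop : f m < f k
  htop : f k < f (m - 1)

namespace Ctx

variable {n r k m : ℕ} {f : ℕ → ℕ}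

lemma g_lt (_C : Ctx n r f k m) {j : ℕ} (h : j < k) : rotL f k m j = f j := rotL_lt h

lemma g_ge (_C : Ctx n r f k m) {j : ℕ} (h : m ≤ j) : rotL f k m j = f j := rotL_ge h

lemma g_blk (_C : Ctx n r f k m) {j : ℕ} (h1 : k ≤ j) (h2 : j + 1 < m) : rotL f k m j = f (j + 1) :=
  rotL_blk h1 h2

lemma g_top (C : Ctx n r f k m) : rotL f k m (m - 1) = f k :=
  rotL_top (by have := C.hkm; omega) (by have := C.hkm; omega)

/-- block values of both `f` and `g` on `[k, m-1]` are `≥ f k`. -/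
lemma f_blk_ge (C : Ctx n r f k m) {j : ℕ} (h1 : k ≤ j) (h2 : j ≤ m - 1) : f k ≤ f j := by
  rcases Nat.eq_or_lt_of_le h1 with h | h
  · rw [h]
  · exact C.hint j h (by omega)

lemma g_blk_ge (C : Ctx n r f k m) {j : ℕ} (h1 : k ≤ j) (h2 : j ≤ m - 1) : f k ≤ rotL f k m j := by
  have hkm := C.hkm
  rcases Nat.lt_or_ge (j + 1) m with h | h
  · rw [C.g_blk h1 h]
    exact C.f_blk_ge (by omega) (by omega)
  · have : j = m - 1 := by omega
    rw [this, C.g_top]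

lemma g_out (C : Ctx n r f k m) {j : ℕ} (h : j < k ∨ m ≤ j) : rotL f k m j = f j := by
  rcases h with h | h
  · exact C.g_lt h
  · exact C.g_ge h

/-- `g` is again a Smirnov word function. -/
lemma g_sw (C : Ctx n r f k m) : SWf n r (rotL f k m) := by
  have hkm := C.hkm
  have hk1 := C.hk1
  have hmn := C.hmn
  constructor
  · rw [C.g_lt (by omega)]; exact C.sw.z
  · rw [C.g_ge C.hmn]; exact C.sw.lastz
  · intro i hi
    rcases Nat.lt_or_ge (i + 1) k with h | h
    · rw [C.g_lt (by omega), C.g_lt h]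
      exact C.sw.ne i hi
    · rcases Nat.eq_or_lt_of_le h with h' | h'
      · -- i + 1 = k
        rw [C.g_lt (by omega), C.g_blk (by omega) (by omega)]
        have e2 : i + 1 + 1 = k + 1 := by omega
        have e3 : i = k - 1 := by omega
        rw [e2, e3]
        have := C.hprev
        have := C.hnext
        omega
      · rcases Nat.lt_or_ge (i + 2) m with h2 | h2
        · -- k ≤ i and i+2 < m : both in block
          rw [C.g_blk (by omega) (by omega), C.g_blk (by omega) h2]
          exact C.sw.ne (i + 1) (by omega)
        · rcases Nat.eq_or_lt_of_le h2 with h3 | h3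
          · -- i + 2 = m, i.e. i = m-2
            rw [C.g_blk (by omega) (by omega)]
            have e : i + 1 = m - 1 := by omega
            rw [e, C.g_top]
            have := C.htop
            omega
          · rcases Nat.lt_or_ge i m with h4 | h4
            · -- i = m - 1
              have e : i = m - 1 := by omega
              rw [e, C.g_top, C.g_ge (by omega)]
              have e2 : m - 1 + 1 = m := by omega
              rw [e2]
              have := C.hdrop
              omega
            · rw [C.g_ge (by omega), C.g_ge (by omega)]
              exact C.sw.ne i hi
  · intro i
    rcases Nat.lt_or_ge i k with h | h
    · rw [C.g_lt h]; exact C.sw.ltr i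
    · rcases Nat.lt_or_ge (i + 1) m with h2 | h2
      · rw [C.g_blk h h2]; exact C.sw.ltr (i + 1)
      · rcases Nat.lt_or_ge i m with h3 | h3
        · have e : i = m - 1 := by omega
          rw [e, C.g_top]; exact C.sw.ltr k
        · rw [C.g_ge h3]; exact C.sw.ltr i
  · intro i hi
    rw [C.g_ge (by omega)]
    exact C.sw.big i hi

/-- the new double descent at `m - 1`. -/
lemma newDD (C : Ctx n r f k m) : isDD n (rotL f k m) (m - 1) ∧ lrise (rotL f k m) (m - 1) = k - 1 ∧
    ¬ mDD (rotL f k m) (m - 1) ∧ rotL f k m (m - 1) = f k := by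
  have hkm := C.hkm
  have hk1 := C.hk1
  have hmn := C.hmn
  have hdrop := C.hdrop
  have htop := C.htop
  have hg2 : rotL f k m (m - 2) = f (m - 1) := by
    rw [C.g_blk (show k ≤ m - 2 by omega) (show m - 2 + 1 < m by omega)]
    congr 1; omega
  have hgm : rotL f k m m = f m := C.g_ge (le_refl m)
  have hDD : isDD n (rotL f k m) (m - 1) := by
    refine ⟨by omega, by omega, ?_, ?_⟩
    · have e : m - 1 - 1 = m - 2 := by omega
      rw [e, hg2, C.g_top]
      exact C.htop
    · have e : m - 1 + 1 = m := by omega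
      rw [e, hgm, C.g_top]
      exact C.hdrop
  have hlr : lrise (rotL f k m) (m - 1) = k - 1 := by
    apply lrise_eq_of (by omega)
    · rw [C.g_lt (by omega), C.g_top]
      exact C.hprev
    · intro j hj1 hj2 hc
      rw [C.g_top] at hc
      have : f k ≤ rotL f k m j := C.g_blk_ge (by omega) (by omega)
      omega
  refine ⟨hDD, hlr, ?_, C.g_top⟩
  rw [mDD, hlr]
  have e : k - 1 + 1 = k := by omega
  rw [e, C.g_top, C.g_blk (le_refl k) (by omega)]
  have := C.hnext
  omega

/-- no unmatched item of `g` has level below `f k`  (given minimality for `f`). -/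
lemma nolow (C : Ctx n r f k m) (hmin : ∀ j, unm n f j → f k ≤ f j) :
    ∀ q, unm n (rotL f k m) q → f k ≤ rotL f k m q := by
  have hkm := C.hkm
  intro q hq
  by_contra hc
  push_neg at hc
  have hout : q < k ∨ m ≤ q := by
    by_contra h
    push_neg at h
    exact absurd (C.g_blk_ge h.1 (by omega)) (by omega)
  have hgq : rotL f k m q = f q := C.g_out hout
  have htr : unm n f q ↔ unm n (rotL f k m) q := by
    apply unm_congr (by rw [hgq])
    · intro j
      rw [hgq]
      rcases Nat.lt_or_ge j k with h | h
      · rw [C.g_lt h]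
      · rcases Nat.lt_or_ge j m with h2 | h2
        · have hfj : f k ≤ f j := C.f_blk_ge h (by omega)
          have hgj : f k ≤ rotL f k m j := C.g_blk_ge h (by omega)
          rw [hgq] at hc
          constructor <;> intro <;> omega
        · rw [C.g_ge h2]
    · intro j
      rw [hgq]
      rcases Nat.lt_or_ge j k with h | h
      · rw [C.g_lt h]
      · rcases Nat.lt_or_ge j m with h2 | h2
        · have hfj : f k ≤ f j := C.f_blk_ge h (by omega)
          have hgj : f k ≤ rotL f k m j := C.g_blk_ge h (by omega)
          rw [hgq] at hc
          constructor <;> intro <;> omega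
        · rw [C.g_ge h2]
  have := hmin q (htr.2 hq)
  rw [hgq] at hc
  omega

end Ctx

end SmAux

namespace SmAux

variable {n r k m : ℕ} {f g : ℕ → ℕ}

lemma fdrop_eq_fdrop {q N : ℕ} (hval : g q = f q)
    (hagree : ∀ j, j ≤ N → g j = f j) (hN : q < N) (hNmem : f N < f q) :
    fdrop f q = fdrop g q ∧ fdrop f q ≤ N := by
  have hfle : fdrop f q ≤ N := Nat.sInf_le ⟨hN, hNmem⟩
  have hfmem : q < fdrop f q ∧ f (fdrop f q) < f q :=
    Nat.sInf_mem (⟨N, hN, hNmem⟩ : {j | q < j ∧ f j < f q}.Nonempty)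
  have hgle : fdrop g q ≤ fdrop f q := by
    apply Nat.sInf_le
    refine ⟨hfmem.1, ?_⟩
    rw [hagree _ hfle, hval]
    exact hfmem.2
  have hgmem : q < fdrop g q ∧ g (fdrop g q) < g q :=
    Nat.sInf_mem (⟨N, hN, by rw [hagree _ (le_refl N), hval]; exact hNmem⟩ :
      {j | q < j ∧ g j < g q}.Nonempty)
  have hfle2 : fdrop f q ≤ fdrop g q := by
    apply Nat.sInf_le
    refine ⟨hgmem.1, ?_⟩
    have := hgmem.2
    rwa [hagree _ (le_trans hgle hfle), hval] at this
  exact ⟨le_antisymm hfle2 hgle, hfle⟩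

lemma lrise_congr {q : ℕ} (hval : g q = f q) (hagree : ∀ j, j < q → g j = f j) :
    lrise f q = lrise g q := by
  unfold lrise
  congr 1
  ext j
  simp only [Set.mem_setOf_eq]
  constructor
  · rintro ⟨h1, h2⟩
    exact ⟨h1, by rw [hagree j h1, hval]; exact h2⟩
  · rintro ⟨h1, h2⟩
    rw [hagree j h1, hval] at h2
    exact ⟨h1, h2⟩

namespace Ctx

/-- every unmatched item of `g` at level exactly `f k` lies at or right of `m - 1`. -/
lemma vpos (C : Ctx n r f k m) (hleft : ∀ j, unm n f j → f j = f k → k ≤ j) :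
    ∀ q, unm n (rotL f k m) q → rotL f k m q = f k → m - 1 ≤ q := by
  have hkm := C.hkm
  have hk1 := C.hk1
  have hmn := C.hmn
  intro q hq hval
  by_contra hc
  push_neg at hc
  have hfk1 : 1 ≤ f k := by
    have := C.hprev; omega
  rcases Nat.lt_or_ge q k with hqk | hqk
  · -- q < k
    rcases Nat.eq_or_lt_of_le (show q + 1 ≤ k by omega) with h | h
    · -- q = k - 1
      rw [C.g_lt hqk] at hval
      have : f (k - 1) = f k := by rw [← hval]; congr 1; omega
      have := C.hprev
      omega
    · -- q ≤ k - 2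
      have hgq : rotL f k m q = f q := C.g_lt hqk
      have hq1 : 1 ≤ q := by
        by_contra h0
        push_neg at h0
        have : q = 0 := by omega
        rw [this, C.sw.z] at hgq
        rw [this, hgq] at hval
        omega
      have hnbr : ∀ j, j < k → rotL f k m j = f j := fun j hj => C.g_lt hj
      have hfqk : f q = f k := by rw [← hgq, hval]
      have hDAiff : isDA n (rotL f k m) q ↔ isDA n f q := by
        unfold isDA
        rw [hnbr (q - 1) (by omega), hnbr q (by omega), hnbr (q + 1) (by omega)]
      have hDDiff : isDD n (rotL f k m) q ↔ isDD n f q := by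
        unfold isDD
        rw [hnbr (q - 1) (by omega), hnbr q (by omega), hnbr (q + 1) (by omega)]
      have hfd := fdrop_eq_fdrop (g := rotL f k m) (hnbr q hqk)
        (fun j hj => hnbr j (by omega)) (show q < k - 1 by omega)
        (by rw [hfqk]; exact C.hprev)
      have hfdle := hfd.2
      have hmDAiff : mDA (rotL f k m) q ↔ mDA f q := by
        unfold mDA
        rw [← hfd.1, hnbr (fdrop f q - 1) (by omega), hnbr q hqk]
      have hlr := lrise_congr (g := rotL f k m) (hnbr q hqk)
        (fun j hj => hnbr j (by omega))
      have hlrlt : lrise f q < q := by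
        have hmem : lrise f q < q ∧ f (lrise f q) < f q :=
          Nat.sSup_mem (⟨0, by omega, by rw [C.sw.z, hfqk]; omega⟩ :
            {j | j < q ∧ f j < f q}.Nonempty) ⟨q, fun x hx => le_of_lt hx.1⟩
        exact hmem.1
      have hmDDiff : mDD (rotL f k m) q ↔ mDD f q := by
        unfold mDD
        rw [← hlr, hnbr (lrise f q + 1) (by omega), hnbr q hqk]
      have hunm : unm n f q := by
        rcases hq with ⟨h1, h2⟩ | ⟨h1, h2⟩
        · exact Or.inl ⟨hDAiff.1 h1, fun hh => h2 (hmDAiff.2 hh)⟩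
        · exact Or.inr ⟨hDDiff.1 h1, fun hh => h2 (hmDDiff.2 hh)⟩
      have := hleft q hunm hfqk
      omega
  · -- k ≤ q ≤ m - 2
    have hblk : rotL f k m q = f (q + 1) := C.g_blk hqk (by omega)
    rw [hblk] at hval
    rcases Nat.eq_or_lt_of_le hqk with h | h
    · -- q = k
      rw [← h] at hval
      have := C.hnext
      rw [hval] at this
      omega
    · rcases Nat.eq_or_lt_of_le (show q + 2 ≤ m by omega) with h2 | h2
      · -- q = m - 2
        have : q + 1 = m - 1 := by omega
        rw [this] at hval
        have := C.htop
        omega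
      · -- k + 1 ≤ q ≤ m - 3 : q is a valley of g
        have hga : rotL f k m (q - 1) = f q := by
          rw [C.g_blk (show k ≤ q - 1 by omega) (show q - 1 + 1 < m by omega)]
          congr 1; omega
        have hgb : rotL f k m (q + 1) = f (q + 2) :=
          C.g_blk (by omega) (by omega)
        have hfq : f k < f q := by
          have hge : f k ≤ f q := C.hint q (by omega) (by omega)
          have hne : f q ≠ f (q + 1) := C.sw.ne q (by omega)
          rw [hval] at hne
          omega
        have hfq2 : f k < f (q + 2) := by
          have hge : f k ≤ f (q + 2) := C.hint (q + 2) (by omega) (by omega)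
          have hne : f (q + 1) ≠ f (q + 2) := C.sw.ne (q + 1) (by omega)
          rw [hval] at hne
          omega
        rcases hq with ⟨h1, -⟩ | ⟨h1, -⟩
        · have := h1.2.2.1
          rw [hga, hblk, hval] at this
          omega
        · have := h1.2.2.2
          rw [hgb, hblk, hval] at this
          omega

/-- the selected position of the rotated word is the new double descent `m - 1`. -/
lemma sel_g (C : Ctx n r f k m) (hmin : ∀ j, unm n f j → f k ≤ f j)
    (hleft : ∀ j, unm n f j → f j = f k → k ≤ j) :
    sel n (rotL f k m) = m - 1 := by
  obtain ⟨hDD, hlr, hnm, hval⟩ := C.newDD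
  apply sel_eq (Or.inr ⟨hDD, hnm⟩)
  · intro j hj
    rw [hval]
    exact C.nolow hmin j hj
  · intro j hj hje
    rw [hval] at hje
    exact C.vpos hleft j hj hje

end Ctx

end SmAux

namespace SmAux

variable {n r k m : ℕ} {f : ℕ → ℕ}

lemma ascf_sum (n : ℕ) (f : ℕ → ℕ) :
    ascf n f = ∑ i ∈ Finset.Ico 0 n, (if f i < f (i + 1) then 1 else 0) := by
  rw [ascf, Finset.card_filter, Finset.range_eq_Ico]

namespace Ctx

lemma asc_g (C : Ctx n r f k m) : ascf n (rotL f k m) + 1 = ascf n f := by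
  have hkm := C.hkm
  have hk1 := C.hk1
  have hmn := C.hmn
  set g := rotL f k m with hg
  have step_eq_lo : ∀ i ∈ Finset.Ico 0 (k - 1),
      (if g i < g (i + 1) then (1:ℕ) else 0) = (if f i < f (i + 1) then 1 else 0) := by
    intro i hi
    simp only [Finset.mem_Ico] at hi
    rw [hg, C.g_lt (by omega), C.g_lt (by omega)]
  have step_eq_hi : ∀ i ∈ Finset.Ico m n,
      (if g i < g (i + 1) then (1:ℕ) else 0) = (if f i < f (i + 1) then 1 else 0) := by
    intro i hi
    simp only [Finset.mem_Ico] at hi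
    rw [hg, C.g_ge (by omega), C.g_ge (by omega)]
  have split_f : ascf n f = (∑ i ∈ Finset.Ico 0 (k-1), if f i < f (i + 1) then 1 else 0)
      + (∑ i ∈ Finset.Ico (k-1) m, if f i < f (i + 1) then 1 else 0)
      + (∑ i ∈ Finset.Ico m n, if f i < f (i + 1) then 1 else 0) := by
    rw [ascf_sum]
    rw [← Finset.sum_Ico_consecutive _ (show 0 ≤ k - 1 by omega) (show k - 1 ≤ n by omega)]
    rw [← Finset.sum_Ico_consecutive _ (show k - 1 ≤ m by omega) (show m ≤ n by omega)]
    ring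
  have split_g : ascf n g = (∑ i ∈ Finset.Ico 0 (k-1), if g i < g (i + 1) then 1 else 0)
      + (∑ i ∈ Finset.Ico (k-1) m, if g i < g (i + 1) then 1 else 0)
      + (∑ i ∈ Finset.Ico m n, if g i < g (i + 1) then 1 else 0) := by
    rw [ascf_sum]
    rw [← Finset.sum_Ico_consecutive _ (show 0 ≤ k - 1 by omega) (show k - 1 ≤ n by omega)]
    rw [← Finset.sum_Ico_consecutive _ (show k - 1 ≤ m by omega) (show m ≤ n by omega)]
    ring
  -- middle sums
  have midf : (∑ i ∈ Finset.Ico (k-1) m, if f i < f (i + 1) then (1:ℕ) else 0)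
      = 2 + (∑ i ∈ Finset.Ico (k+1) (m-1), if f i < f (i + 1) then 1 else 0) := by
    rw [Finset.sum_eq_sum_Ico_succ_bot (by omega)]
    have e1 : k - 1 + 1 = k := by omega
    rw [e1]
    rw [Finset.sum_eq_sum_Ico_succ_bot (by omega)]
    have e2 : m = (m - 1) + 1 := by omega
    rw [e2, Finset.sum_Ico_succ_top (by omega)]
    have c1 : (if f (k-1) < f (k - 1 + 1) then (1:ℕ) else 0) = 1 := by
      rw [e1, if_pos C.hprev]
    have c2 : (if f k < f (k + 1) then (1:ℕ) else 0) = 1 := if_pos C.hnext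
    have c3 : (if f (m-1) < f (m - 1 + 1) then (1:ℕ) else 0) = 0 := by
      rw [if_neg]
      rw [← e2]
      have := C.hdrop
      have := C.htop
      omega
    rw [e1] at c1
    rw [c1, c2, c3, ← e2]
    ring
  have midg : (∑ i ∈ Finset.Ico (k-1) m, if g i < g (i + 1) then (1:ℕ) else 0)
      = 1 + (∑ i ∈ Finset.Ico (k+1) (m-1), if f i < f (i + 1) then 1 else 0) := by
    rw [Finset.sum_eq_sum_Ico_succ_bot (by omega)]
    have e1 : k - 1 + 1 = k := by omega
    rw [e1]
    have e2 : m = (m - 1) + 1 := by omega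
    rw [e2, Finset.sum_Ico_succ_top (by omega)]
    have e3 : m - 1 = (m - 2) + 1 := by omega
    rw [e3, Finset.sum_Ico_succ_top (by omega)]
    have c1 : (if g (k-1) < g (k - 1 + 1) then (1:ℕ) else 0) = 1 := by
      rw [e1, hg, C.g_lt (by omega), C.g_blk (le_refl k) (by omega), if_pos]
      have := C.hprev
      have := C.hnext
      omega
    have c2 : (if g (m-2) < g ((m - 2) + 1) then (1:ℕ) else 0) = 0 := by
      rw [← e3, hg, C.g_blk (show k ≤ m - 2 by omega) (show m - 2 + 1 < m by omega),
        C.g_top, if_neg]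
      have e4 : m - 2 + 1 = m - 1 := by omega
      rw [e4]
      have := C.htop
      omega
    have c3 : (if g (m-1) < g ((m - 1) + 1) then (1:ℕ) else 0) = 0 := by
      rw [hg, C.g_top, ← e2, C.g_ge (le_refl m), if_neg]
      have := C.hdrop
      omega
    rw [e1] at c1
    rw [c1, c2]
    have e5 : m - 2 + 1 = m - 1 := by omega
    rw [e5]
    have e6 : m - 1 + 1 - 1 = m - 1 := by omega
    rw [e6, c3]
    have hshift : (∑ i ∈ Finset.Ico k (m-2), if g i < g (i + 1) then (1:ℕ) else 0)
        = ∑ i ∈ Finset.Ico (k+1) (m-1), if f i < f (i + 1) then 1 else 0 := by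
      refine Finset.sum_bij' (fun i _ => i + 1) (fun i _ => i - 1) ?_ ?_ ?_ ?_ ?_
      · intro i hi
        simp only [Finset.mem_Ico] at hi ⊢
        omega
      · intro i hi
        simp only [Finset.mem_Ico] at hi ⊢
        omega
      · intro i hi
        show i + 1 - 1 = i
        omega
      · intro i hi
        simp only [Finset.mem_Ico] at hi
        show i - 1 + 1 = i
        omega
      · intro i hi
        simp only [Finset.mem_Ico] at hi
        rw [hg, C.g_blk (by omega) (by omega), C.g_blk (by omega) (by omega)]
    rw [hshift]
    ring
  rw [split_f, split_g, midf, midg,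
    Finset.sum_congr rfl step_eq_lo, Finset.sum_congr rfl step_eq_hi]
  ring

lemma hopback (C : Ctx n r f k m) : ∀ j, rotR (rotL f k m) k (m - 1) j = f j := by
  have hkm := C.hkm
  intro j
  rcases Nat.lt_or_ge j k with h | h
  · rw [rotR_lt h, C.g_lt h]
  · rcases Nat.eq_or_lt_of_le h with h1 | h1
    · rw [← h1, rotR_a, C.g_top]
    · rcases Nat.lt_or_ge j m with h2 | h2
      · rw [rotR_blk h1 (by omega), C.g_blk (by omega) (by omega)]
        congr 1; omega
      · rw [rotR_gt (by omega) (by omega), C.g_ge h2]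

end Ctx

end SmAux

namespace SmAux

/-- context for the right rotation (hop of an unmatched double descent at `l`,
with `p` the last rise position). -/
structure Ctx' (n r : ℕ) (f : ℕ → ℕ) (p l : ℕ) : Prop where
  sw : SWf n r f
  hpl : p + 2 ≤ l
  hln : l < n
  hrise : f p < f l
  hnext : f (l + 1) < f l
  hint : ∀ j, p < j → j < l → f l ≤ f j
  hbot : f l < f (p + 1)

namespace Ctx'

variable {n r p l : ℕ} {f : ℕ → ℕ}

lemma g_lt (_C : Ctx' n r f p l) {j : ℕ} (h : j ≤ p) : rotR f (p + 1) l j = f j :=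
  rotR_lt (by omega)

lemma g_gt (C : Ctx' n r f p l) {j : ℕ} (h : l < j) : rotR f (p + 1) l j = f j :=
  rotR_gt h (by have := C.hpl; omega)

lemma g_a (_C : Ctx' n r f p l) : rotR f (p + 1) l (p + 1) = f l := rotR_a

lemma g_blk (_C : Ctx' n r f p l) {j : ℕ} (h1 : p + 1 < j) (h2 : j ≤ l) :
    rotR f (p + 1) l j = f (j - 1) := rotR_blk h1 h2

lemma f_blk_ge (C : Ctx' n r f p l) {j : ℕ} (h1 : p + 1 ≤ j) (h2 : j ≤ l) : f l ≤ f j := by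
  rcases Nat.eq_or_lt_of_le h2 with h | h
  · rw [h]
  · exact C.hint j (by omega) h

lemma g_blk_ge (C : Ctx' n r f p l) {j : ℕ} (h1 : p + 1 ≤ j) (h2 : j ≤ l) :
    f l ≤ rotR f (p + 1) l j := by
  rcases Nat.eq_or_lt_of_le h1 with h | h
  · rw [← h, C.g_a]
  · rw [C.g_blk h h2]
    exact C.f_blk_ge (by omega) (by omega)

lemma hftop (C : Ctx' n r f p l) : f l < f (l - 1) := by
  have hge : f l ≤ f (l - 1) := C.hint (l - 1) (by have := C.hpl; omega) (by have := C.hpl; omega)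
  have hne : f (l - 1) ≠ f l := by
    have := C.sw.ne (l - 1) (by have := C.hln; have := C.hpl; omega)
    have e : l - 1 + 1 = l := by have := C.hpl; omega
    rwa [e] at this
  omega

lemma g_sw (C : Ctx' n r f p l) : SWf n r (rotR f (p + 1) l) := by
  have hpl := C.hpl
  have hln := C.hln
  constructor
  · rw [C.g_lt (by omega)]; exact C.sw.z
  · rw [C.g_gt (by omega)]; exact C.sw.lastz
  · intro i hi
    rcases Nat.lt_or_ge i p with h | h
    · rw [C.g_lt (by omega), C.g_lt (by omega)]
      exact C.sw.ne i hi
    · rcases Nat.eq_or_lt_of_le h with h1 | h1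
      · rw [← h1, C.g_lt (le_refl p), C.g_a]
        have := C.hrise
        omega
      · rcases Nat.eq_or_lt_of_le (show p + 1 ≤ i from h1) with h2 | h2
        · rw [← h2, C.g_a, C.g_blk (by omega) (by omega)]
          have e : p + 1 + 1 - 1 = p + 1 := by omega
          rw [e]
          have := C.hbot
          omega
        · rcases Nat.lt_or_ge i l with h3 | h3
          · rw [C.g_blk h2 (by omega), C.g_blk (by omega) (by omega)]
            have e : i + 1 - 1 = i - 1 + 1 := by omega
            rw [e]
            exact C.sw.ne (i - 1) (by omega)
          · rcases Nat.eq_or_lt_of_le h3 with h4 | h4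
            · have e : i = l := by omega
              subst e
              rw [C.g_blk (by omega) (le_refl i), C.g_gt (by omega)]
              have h5 := C.hftop
              have h6 := C.hnext
              omega
            · rw [C.g_gt (by omega), C.g_gt (by omega)]
              exact C.sw.ne i hi
  · intro i
    rcases Nat.lt_or_ge i (p + 1) with h | h
    · rw [C.g_lt (by omega)]; exact C.sw.ltr i
    · rcases Nat.eq_or_lt_of_le h with h1 | h1
      · rw [← h1, C.g_a]; exact C.sw.ltr l
      · rcases le_or_gt i l with h2 | h2
        · rw [C.g_blk h1 h2]; exact C.sw.ltr (i - 1)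
        · rw [C.g_gt h2]; exact C.sw.ltr i
  · intro i hi
    rw [C.g_gt (by omega)]
    exact C.sw.big i hi

lemma newDA (C : Ctx' n r f p l) : isDA n (rotR f (p + 1) l) (p + 1) ∧
    fdrop (rotR f (p + 1) l) (p + 1) = l + 1 ∧ ¬ mDA (rotR f (p + 1) l) (p + 1) ∧
    rotR f (p + 1) l (p + 1) = f l := by
  have hpl := C.hpl
  have hln := C.hln
  have hDA : isDA n (rotR f (p + 1) l) (p + 1) := by
    refine ⟨by omega, by omega, ?_, ?_⟩
    · have e : p + 1 - 1 = p := by omega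
      rw [e, C.g_a, C.g_lt (le_refl p)]
      exact C.hrise
    · rw [C.g_a, C.g_blk (by omega) (by omega)]
      have e : p + 1 + 1 - 1 = p + 1 := by omega
      rw [e]
      exact C.hbot
  have hfd : fdrop (rotR f (p + 1) l) (p + 1) = l + 1 := by
    apply fdrop_eq_of (by omega)
    · rw [C.g_a, C.g_gt (by omega)]
      exact C.hnext
    · intro j hj1 hj2 hc
      rw [C.g_a] at hc
      have := C.g_blk_ge (show p + 1 ≤ j by omega) (show j ≤ l by omega)
      omega
  refine ⟨hDA, hfd, ?_, C.g_a⟩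
  rw [mDA, hfd]
  have e : l + 1 - 1 = l := by omega
  rw [e, C.g_a, C.g_blk (by omega) (by omega)]
  have := C.hftop
  omega

lemma nolow (C : Ctx' n r f p l) (hmin : ∀ j, unm n f j → f l ≤ f j) :
    ∀ q, unm n (rotR f (p + 1) l) q → f l ≤ rotR f (p + 1) l q := by
  have hpl := C.hpl
  intro q hq
  by_contra hc
  push_neg at hc
  have hout : q ≤ p ∨ l < q := by
    by_contra h
    push_neg at h
    exact absurd (C.g_blk_ge (show p + 1 ≤ q by omega) (show q ≤ l by omega)) (by omega)
  have hgq : rotR f (p + 1) l q = f q := by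
    rcases hout with h | h
    · exact C.g_lt h
    · exact C.g_gt h
  have htr : unm n f q ↔ unm n (rotR f (p + 1) l) q := by
    apply unm_congr (by rw [hgq])
    · intro j
      rw [hgq]
      rcases Nat.lt_or_ge j (p + 1) with h | h
      · rw [C.g_lt (by omega)]
      · rcases le_or_gt j l with h2 | h2
        · have hfj : f l ≤ f j := C.f_blk_ge h h2
          have hgj : f l ≤ rotR f (p + 1) l j := C.g_blk_ge h h2
          rw [hgq] at hc
          constructor <;> intro <;> omega
        · rw [C.g_gt h2]
    · intro j
      rw [hgq]
      rcases Nat.lt_or_ge j (p + 1) with h | h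
      · rw [C.g_lt (by omega)]
      · rcases le_or_gt j l with h2 | h2
        · have hfj : f l ≤ f j := C.f_blk_ge h h2
          have hgj : f l ≤ rotR f (p + 1) l j := C.g_blk_ge h h2
          rw [hgq] at hc
          constructor <;> intro <;> omega
        · rw [C.g_gt h2]
  have := hmin q (htr.2 hq)
  rw [hgq] at hc
  omega

lemma vpos (C : Ctx' n r f p l) (hleft : ∀ j, unm n f j → f j = f l → l ≤ j) :
    ∀ q, unm n (rotR f (p + 1) l) q → rotR f (p + 1) l q = f l → p + 1 ≤ q := by
  have hpl := C.hpl
  have hln := C.hln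
  have hfl1 : 1 ≤ f l := by have := C.hnext; omega
  intro q hq hval
  by_contra hc
  push_neg at hc
  have hq_le : q ≤ p := by omega
  have hgq : rotR f (p + 1) l q = f q := C.g_lt hq_le
  have hfqk : f q = f l := by rw [← hgq, hval]
  rcases Nat.eq_or_lt_of_le hq_le with h | h
  · -- q = p
    rw [h] at hfqk
    have := C.hrise
    omega
  · -- q ≤ p - 1
    have hq1 : 1 ≤ q := by
      by_contra h0
      push_neg at h0
      have hq0 : q = 0 := by omega
      rw [hq0, C.sw.z] at hfqk
      omega
    have hnbr : ∀ j, j ≤ p → rotR f (p + 1) l j = f j := fun j hj => C.g_lt hj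
    have hDAiff : isDA n (rotR f (p + 1) l) q ↔ isDA n f q := by
      unfold isDA
      rw [hnbr (q - 1) (by omega), hnbr q (by omega), hnbr (q + 1) (by omega)]
    have hDDiff : isDD n (rotR f (p + 1) l) q ↔ isDD n f q := by
      unfold isDD
      rw [hnbr (q - 1) (by omega), hnbr q (by omega), hnbr (q + 1) (by omega)]
    have hfd := fdrop_eq_fdrop (g := rotR f (p + 1) l) (hnbr q hq_le)
      (fun j hj => hnbr j hj) (show q < p by omega)
      (by rw [hfqk]; exact C.hrise)
    have hfdle := hfd.2
    have hmDAiff : mDA (rotR f (p + 1) l) q ↔ mDA f q := by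
      unfold mDA
      rw [← hfd.1, hnbr (fdrop f q - 1) (by omega), hnbr q hq_le]
    have hlr := lrise_congr (g := rotR f (p + 1) l) (hnbr q hq_le)
      (fun j hj => hnbr j (by omega))
    have hlrlt : lrise f q < q := by
      have hmem : lrise f q < q ∧ f (lrise f q) < f q :=
        Nat.sSup_mem (⟨0, by omega, by rw [C.sw.z, hfqk]; omega⟩ :
          {j | j < q ∧ f j < f q}.Nonempty) ⟨q, fun x hx => le_of_lt hx.1⟩
      exact hmem.1
    have hmDDiff : mDD (rotR f (p + 1) l) q ↔ mDD f q := by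
      unfold mDD
      rw [← hlr, hnbr (lrise f q + 1) (by omega), hnbr q hq_le]
    have hunm : unm n f q := by
      rcases hq with ⟨h1, h2⟩ | ⟨h1, h2⟩
      · exact Or.inl ⟨hDAiff.1 h1, fun hh => h2 (hmDAiff.2 hh)⟩
      · exact Or.inr ⟨hDDiff.1 h1, fun hh => h2 (hmDDiff.2 hh)⟩
    have := hleft q hunm hfqk
    omega

lemma sel_g (C : Ctx' n r f p l) (hmin : ∀ j, unm n f j → f l ≤ f j)
    (hleft : ∀ j, unm n f j → f j = f l → l ≤ j) :
    sel n (rotR f (p + 1) l) = p + 1 := by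
  obtain ⟨hDA, hfd, hnm, hval⟩ := C.newDA
  apply sel_eq (Or.inl ⟨hDA, hnm⟩)
  · intro j hj
    rw [hval]
    exact C.nolow hmin j hj
  · intro j hj hje
    rw [hval] at hje
    exact C.vpos hleft j hj hje

lemma hopback (C : Ctx' n r f p l) : ∀ j, rotL (rotR f (p + 1) l) (p + 1) (l + 1) j = f j := by
  have hpl := C.hpl
  intro j
  rcases Nat.lt_or_ge j (p + 1) with h | h
  · rw [rotL_lt h, C.g_lt (by omega)]
  · rcases Nat.lt_or_ge j l with h1 | h1
    · rw [rotL_blk h (by omega), C.g_blk (by omega) (by omega)]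
      congr 1
    · rcases Nat.eq_or_lt_of_le h1 with h2 | h2
      · rw [← h2]
        have htop := rotL_top (f := rotR f (p + 1) l) (k := p + 1) (m := l + 1)
          (by omega) (by omega)
        have e2 : l + 1 - 1 = l := by omega
        rw [e2] at htop
        rw [htop, C.g_a]
      · rw [rotL_ge (by omega), C.g_gt (by omega)]

end Ctx'

end SmAux

namespace SmAux

namespace Ctx'

variable {n r p l : ℕ} {f : ℕ → ℕ}

lemma asc_g (C : Ctx' n r f p l) : ascf n (rotR f (p + 1) l) = ascf n f + 1 := by
  have hpl := C.hpl
  have hln := C.hln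
  set g := rotR f (p + 1) l with hg
  have step_eq_lo : ∀ i ∈ Finset.Ico 0 p,
      (if g i < g (i + 1) then (1:ℕ) else 0) = (if f i < f (i + 1) then 1 else 0) := by
    intro i hi
    simp only [Finset.mem_Ico] at hi
    rw [hg, C.g_lt (by omega), C.g_lt (by omega)]
  have step_eq_hi : ∀ i ∈ Finset.Ico (l+1) n,
      (if g i < g (i + 1) then (1:ℕ) else 0) = (if f i < f (i + 1) then 1 else 0) := by
    intro i hi
    simp only [Finset.mem_Ico] at hi
    rw [hg, C.g_gt (by omega), C.g_gt (by omega)]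
  have split_f : ascf n f = (∑ i ∈ Finset.Ico 0 p, if f i < f (i + 1) then 1 else 0)
      + (∑ i ∈ Finset.Ico p (l+1), if f i < f (i + 1) then 1 else 0)
      + (∑ i ∈ Finset.Ico (l+1) n, if f i < f (i + 1) then 1 else 0) := by
    rw [ascf_sum]
    rw [← Finset.sum_Ico_consecutive _ (show 0 ≤ p by omega) (show p ≤ n by omega)]
    rw [← Finset.sum_Ico_consecutive _ (show p ≤ l + 1 by omega) (show l + 1 ≤ n by omega)]
    ring
  have split_g : ascf n g = (∑ i ∈ Finset.Ico 0 p, if g i < g (i + 1) then 1 else 0)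
      + (∑ i ∈ Finset.Ico p (l+1), if g i < g (i + 1) then 1 else 0)
      + (∑ i ∈ Finset.Ico (l+1) n, if g i < g (i + 1) then 1 else 0) := by
    rw [ascf_sum]
    rw [← Finset.sum_Ico_consecutive _ (show 0 ≤ p by omega) (show p ≤ n by omega)]
    rw [← Finset.sum_Ico_consecutive _ (show p ≤ l + 1 by omega) (show l + 1 ≤ n by omega)]
    ring
  have midf : (∑ i ∈ Finset.Ico p (l+1), if f i < f (i + 1) then (1:ℕ) else 0)
      = 1 + (∑ i ∈ Finset.Ico (p+1) (l-1), if f i < f (i + 1) then 1 else 0) := by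
    rw [Finset.sum_eq_sum_Ico_succ_bot (by omega)]
    rw [Finset.sum_Ico_succ_top (by omega)]
    have e3 : l = (l - 1) + 1 := by omega
    rw [e3, Finset.sum_Ico_succ_top (by omega)]
    have c1 : (if f p < f (p + 1) then (1:ℕ) else 0) = 1 := by
      rw [if_pos]
      have := C.hrise
      have := C.hbot
      omega
    have c2 : (if f (l-1) < f ((l - 1) + 1) then (1:ℕ) else 0) = 0 := by
      rw [if_neg]
      rw [← e3]
      have := C.hftop
      omega
    have c3 : (if f l < f (l + 1) then (1:ℕ) else 0) = 0 := by
      rw [if_neg]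
      have := C.hnext
      omega
    rw [c1, c2, ← e3, c3]
    ring
  have midg : (∑ i ∈ Finset.Ico p (l+1), if g i < g (i + 1) then (1:ℕ) else 0)
      = 2 + (∑ i ∈ Finset.Ico (p+1) (l-1), if f i < f (i + 1) then 1 else 0) := by
    rw [Finset.sum_eq_sum_Ico_succ_bot (by omega)]
    rw [Finset.sum_eq_sum_Ico_succ_bot (by omega)]
    rw [Finset.sum_Ico_succ_top (by omega)]
    have c1 : (if g p < g (p + 1) then (1:ℕ) else 0) = 1 := by
      rw [hg, C.g_lt (le_refl p), C.g_a, if_pos C.hrise]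
    have c2 : (if g (p+1) < g (p + 1 + 1) then (1:ℕ) else 0) = 1 := by
      rw [hg, C.g_a, C.g_blk (by omega) (by omega), if_pos]
      have e : p + 1 + 1 - 1 = p + 1 := by omega
      rw [e]
      exact C.hbot
    have c3 : (if g l < g (l + 1) then (1:ℕ) else 0) = 0 := by
      rw [hg, C.g_blk (by omega) (le_refl l), C.g_gt (by omega), if_neg]
      have := C.hftop
      have := C.hnext
      omega
    rw [c1, c2, c3]
    have hshift : (∑ i ∈ Finset.Ico (p+1+1) l, if g i < g (i + 1) then (1:ℕ) else 0)
        = ∑ i ∈ Finset.Ico (p+1) (l-1), if f i < f (i + 1) then 1 else 0 := by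
      refine Finset.sum_bij' (fun i _ => i - 1) (fun i _ => i + 1) ?_ ?_ ?_ ?_ ?_
      · intro i hi
        simp only [Finset.mem_Ico] at hi ⊢
        omega
      · intro i hi
        simp only [Finset.mem_Ico] at hi ⊢
        omega
      · intro i hi
        simp only [Finset.mem_Ico] at hi
        show i - 1 + 1 = i
        omega
      · intro i hi
        show i + 1 - 1 = i
        omega
      · intro i hi
        simp only [Finset.mem_Ico] at hi
        rw [hg, C.g_blk (by omega) (by omega), C.g_blk (by omega) (by omega)]
        have e1 : i + 1 - 1 = i - 1 + 1 := by omega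
        rw [e1]
    rw [hshift]
    ring
  rw [split_f, split_g, midf, midg,
    Finset.sum_congr rfl step_eq_lo, Finset.sum_congr rfl step_eq_hi]
  ring

end Ctx'

end SmAux

namespace SmAux

variable {n r : ℕ}

lemma wv_le {w : Fin (n + 1) → ℕ} {j : ℕ} (h : j ≤ n) : wv w j = w ⟨j, by omega⟩ :=
  dif_pos (by omega)

lemma wv_big {w : Fin (n + 1) → ℕ} {j : ℕ} (h : n < j) : wv w j = 0 :=
  dif_neg (by omega)

lemma wv_val {w : Fin (n + 1) → ℕ} (i : Fin (n + 1)) : wv w i.val = w i := by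
  rw [wv_le (by omega)]

lemma swf_of_mem (hr : 0 < r) {w : Fin (n + 1) → ℕ} (hw : w ∈ smirnov n r) :
    SWf n r (wv w) := by
  rw [smirnov, Finset.mem_filter] at hw
  obtain ⟨hpi, h0, hn, hne⟩ := hw
  rw [Fintype.mem_piFinset] at hpi
  refine ⟨h0, hn, hne, ?_, fun i hi => wv_big hi⟩
  intro i
  rcases le_or_gt i n with h | h
  · rw [wv_le h]
    exact Finset.mem_range.1 (hpi _)
  · rw [wv_big h]
    exact hr

lemma mem_of_swf {u : Fin (n + 1) → ℕ} (h : SWf n r (wv u)) : u ∈ smirnov n r := by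
  rw [smirnov, Finset.mem_filter]
  refine ⟨?_, h.z, h.lastz, h.ne⟩
  rw [Fintype.mem_piFinset]
  intro i
  rw [Finset.mem_range]
  have := h.ltr i.val
  rwa [wv_val i] at this

/-- the hop involution. -/
def hopw (n : ℕ) (w : Fin (n + 1) → ℕ) : Fin (n + 1) → ℕ :=
  if isDA n (wv w) (sel n (wv w)) then
    fun i => rotL (wv w) (sel n (wv w)) (fdrop (wv w) (sel n (wv w))) i.val
  else
    fun i => rotR (wv w) (lrise (wv w) (sel n (wv w)) + 1) (sel n (wv w)) i.val

lemma hopw_pos {w' : Fin (n + 1) → ℕ} (h : isDA n (wv w') (sel n (wv w'))) :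
    hopw n w' = fun i => rotL (wv w') (sel n (wv w')) (fdrop (wv w') (sel n (wv w'))) i.val := by
  rw [hopw, if_pos h]

lemma hopw_neg {w' : Fin (n + 1) → ℕ} (h : ¬ isDA n (wv w') (sel n (wv w'))) :
    hopw n w' = fun i =>
      rotR (wv w') (lrise (wv w') (sel n (wv w')) + 1) (sel n (wv w')) i.val := by
  rw [hopw, if_neg h]

lemma neg_one_pow_add_eq_zero {a b : ℕ} (h : a + 1 = b) :
    (-1 : ℤ) ^ a + (-1) ^ b = 0 := by
  rw [← h, pow_succ]
  ring

lemma hop_all {w : Fin (n + 1) → ℕ} (hr : 0 < r) (hw : w ∈ smirnov n r)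
    (hnf : ¬ Fixedf n (wv w)) :
    hopw n w ∈ smirnov n r ∧ ¬ Fixedf n (wv (hopw n w)) ∧
      (ascf n (wv (hopw n w)) + 1 = ascf n (wv w) ∨
        ascf n (wv w) + 1 = ascf n (wv (hopw n w))) ∧
      hopw n (hopw n w) = w := by
  have hsw : SWf n r (wv w) := swf_of_mem hr hw
  set f := wv w with hf
  have hne : (USet n f).Nonempty := by
    rw [Fixedf, not_forall] at hnf
    obtain ⟨k, hk⟩ := hnf
    rw [not_not] at hk
    exact ⟨k, mem_USet hk⟩
  obtain ⟨hu, hmin, hleft⟩ := sel_spec hne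
  set s := sel n f with hs
  by_cases hDA : isDA n f s
  · -- double ascent case
    have hnm : ¬ mDA f s := by
      rcases hu with ⟨-, h⟩ | ⟨h, -⟩
      · exact h
      · exfalso
        have h1 := hDA.2.2.1
        have h2 := h.2.2.1
        omega
    obtain ⟨m1, m2, m3, m4, m5⟩ := fd_facts hsw hDA
    set m := fdrop f s with hm
    have htop : f s < f (m - 1) := by
      have hge : f s ≤ f (m - 1) := m5 (m - 1) (by omega) (by omega)
      have : f (m - 1) ≠ f s := hnm
      omega
    have C : Ctx n r f s m :=
      ⟨hsw, hDA.1, m2, m3, hDA.2.2.1, hDA.2.2.2, m5, m4, htop⟩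
    have hdef : hopw n w = fun i => rotL f s m i.val := hopw_pos hDA
    have hwv : wv (hopw n w) = rotL f s m := by
      funext j
      rcases le_or_gt j n with h | h
      · rw [wv_le h, hdef]
      · rw [wv_big h, rotL_ge (by omega), hf, wv_big h]
    refine ⟨mem_of_swf (by rw [hwv]; exact C.g_sw), ?_, ?_, ?_⟩
    · rw [hwv]
      intro hfix
      obtain ⟨hDD, -, hnmdd, -⟩ := C.newDD
      exact hfix (m - 1) (Or.inr ⟨hDD, hnmdd⟩)
    · left
      rw [hwv]
      exact C.asc_g
    · -- involution
      obtain ⟨hDD, hlr, hnmdd, hval⟩ := C.newDD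
      have hsel2 : sel n (wv (hopw n w)) = m - 1 := by
        rw [hwv]
        exact C.sel_g hmin hleft
      have hnDA : ¬ isDA n (rotL f s m) (m - 1) := by
        intro hA
        exact Nat.lt_asymm hA.2.2.1 hDD.2.2.1
      rw [hopw_neg (by rw [hsel2, hwv]; exact hnDA)]
      funext i
      rw [hsel2, hwv, hlr]
      have hs1 : 1 ≤ s := hDA.1
      have e : s - 1 + 1 = s := by omega
      rw [e, C.hopback i.val, hf, wv_val]
  · -- double descent case
    have hDD : isDD n f s ∧ ¬ mDD f s := by
      rcases hu with ⟨h, -⟩ | ⟨h1, h2⟩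
      · exact absurd h hDA
      · exact ⟨h1, h2⟩
    obtain ⟨p1, p2, p3, p4⟩ := lr_facts hsw hDD.1
    have hsn : s < n := hDD.1.2.1
    set p := lrise f s with hp
    have hbot : f s < f (p + 1) := by
      have hge : f s ≤ f (p + 1) := p4 (p + 1) (by omega) (by omega)
      have : f (p + 1) ≠ f s := hDD.2
      omega
    have C : Ctx' n r f p s :=
      ⟨hsw, p2, hDD.1.2.1, p3, hDD.1.2.2.2, p4, hbot⟩
    have hdef : hopw n w = fun i => rotR f (p + 1) s i.val := hopw_neg hDA
    have hwv : wv (hopw n w) = rotR f (p + 1) s := by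
      funext j
      rcases le_or_gt j n with h | h
      · rw [wv_le h, hdef]
      · rw [wv_big h, rotR_gt (by omega) (by omega), hf, wv_big h]
    refine ⟨mem_of_swf (by rw [hwv]; exact C.g_sw), ?_, ?_, ?_⟩
    · rw [hwv]
      intro hfix
      obtain ⟨hDA2, -, hnmda, -⟩ := C.newDA
      exact hfix (p + 1) (Or.inl ⟨hDA2, hnmda⟩)
    · right
      rw [hwv]
      exact C.asc_g.symm
    · obtain ⟨hDA2, hfd, hnmda, hval⟩ := C.newDA
      have hsel2 : sel n (wv (hopw n w)) = p + 1 := by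
        rw [hwv]
        exact C.sel_g hmin hleft
      rw [hopw_pos (by rw [hsel2, hwv]; exact hDA2)]
      funext i
      rw [hsel2, hwv, hfd, C.hopback i.val, hf, wv_val]

lemma asc_eq_ascf (w : Fin (n + 1) → ℕ) : asc w = ascf n (wv w) := rfl

lemma fixed_iff_w (hr : 0 < r) {w : Fin (n + 1) → ℕ} (hw : w ∈ smirnov n r) :
    Fixedf n (wv w) ↔ (2 * asc w = n ∧ hasMatching w) := by
  have hsw := swf_of_mem hr hw
  rw [fixed_iff hsw, asc_eq_ascf]
  have hmatch : (∀ k, isDA n (wv w) k → mDA (wv w) k) ↔ hasMatching w := by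
    constructor
    · intro h k hk
      have hk' : isDA n (wv w) k := hk
      obtain ⟨l, h1, h2, h3, h4⟩ := (mDA_iff_matching hsw hk').1 (h k hk')
      exact ⟨l, h1, ⟨h2.1, h2.2.1, h2.2.2.1, h2.2.2.2⟩, h3, h4⟩
    · intro h k hk
      obtain ⟨l, h1, h2, h3, h4⟩ := h k hk
      exact (mDA_iff_matching hsw hk).2 ⟨l, h1, ⟨h2.1, h2.2.1, h2.2.2.1, h2.2.2.2⟩, h3, h4⟩
  rw [hmatch]

end SmAux


open SmAux in
/-- If `n` is even, `Σ_{w ∈ S(n,r)} (-1)^{asc w} = (-1)^{n/2} ξ_{n,r,n/2}`, where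
`ξ_{n,r,n/2}` counts the words in `S(n,r)` with exactly `n/2` ascents having the
matching property; if `n` is odd, the sum vanishes. -/
theorem smirnov_ascent_at_neg_one (n r : ℕ) (hn : 0 < n) (hr : 0 < r) :
    (Even n →
      ∑ w ∈ smirnov n r, (-1 : ℤ) ^ asc w =
        (-1) ^ (n / 2) *
          (((smirnov n r).filter fun w => asc w = n / 2 ∧ hasMatching w).card : ℤ)) ∧
    (Odd n → ∑ w ∈ smirnov n r, (-1 : ℤ) ^ asc w = 0) := by
  have hsplit := Finset.sum_filter_add_sum_filter_not (smirnov n r)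
    (fun w => Fixedf n (wv w)) (fun w => (-1 : ℤ) ^ asc w)
  have hrest : ∑ w ∈ (smirnov n r).filter (fun w => ¬ Fixedf n (wv w)),
      (-1 : ℤ) ^ asc w = 0 := by
    apply Finset.sum_involution (fun w _ => hopw n w)
    · intro a ha
      rw [Finset.mem_filter] at ha
      obtain ⟨hmem, hnfix, hasc, hinv⟩ := hop_all hr ha.1 ha.2
      rw [asc_eq_ascf, asc_eq_ascf]
      rcases hasc with h | h
      · rw [add_comm]
        exact neg_one_pow_add_eq_zero h
      · exact neg_one_pow_add_eq_zero h
    · intro a ha _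
      rw [Finset.mem_filter] at ha
      obtain ⟨hmem, hnfix, hasc, hinv⟩ := hop_all hr ha.1 ha.2
      intro heq
      rw [heq] at hasc
      omega
    · intro a ha
      rw [Finset.mem_filter] at ha ⊢
      obtain ⟨hmem, hnfix, hasc, hinv⟩ := hop_all hr ha.1 ha.2
      exact ⟨hmem, hnfix⟩
    · intro a ha
      rw [Finset.mem_filter] at ha
      exact (hop_all hr ha.1 ha.2).2.2.2
  constructor
  · intro heven
    have hfe : (smirnov n r).filter (fun w => Fixedf n (wv w)) =
        (smirnov n r).filter (fun w => asc w = n / 2 ∧ hasMatching w) := by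
      apply Finset.filter_congr
      intro w hw
      rw [fixed_iff_w hr hw]
      obtain ⟨c, hc⟩ := heven
      constructor
      · rintro ⟨h1, h2⟩
        exact ⟨by omega, h2⟩
      · rintro ⟨h1, h2⟩
        exact ⟨by omega, h2⟩
    have hfix_sum : ∑ w ∈ (smirnov n r).filter (fun w => Fixedf n (wv w)),
        (-1 : ℤ) ^ asc w =
        (((smirnov n r).filter fun w => asc w = n / 2 ∧ hasMatching w).card : ℤ) *
          (-1) ^ (n / 2) := by
      rw [hfe]
      rw [Finset.sum_congr rfl (fun w hw => ?_), Finset.sum_const, nsmul_eq_mul]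
      rw [Finset.mem_filter] at hw
      rw [hw.2.1]
    rw [← hsplit, hrest, hfix_sum]
    ring
  · intro hodd
    have hfe : (smirnov n r).filter (fun w => Fixedf n (wv w)) = ∅ := by
      rw [Finset.filter_eq_empty_iff]
      intro w hw hfix
      have := ((fixed_iff_w hr hw).1 hfix).1
      obtain ⟨c, hc⟩ := hodd
      omega
    rw [← hsplit, hrest, hfe, Finset.sum_empty]
    ring
end
end

section
/- Let n and r be positive integers. In the ring ℤ[[X]] of formal power series, (1 − X)^{n+1} · Σ_{m ≥ 0} C(n + rm, n) X^m = Σ_{w ∈ {0,1,…,r−1}^n} X^{asc(w)}, where the right-hand side is the polynomial enumerating all words w = (w_1, …, w_n) ∈ {0,1,…,r−1}^n by their number of ascents. -/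
/-
With `c_n(M) = C(M + n, n)`, the hockey-stick identity gives
`c_{n+1}(M) = ∑_{t ≤ M} c_n(t)`. Grouping the `t` in the window `(r(m - 1) + p, rm + p]` by
their residue mod `r` yields, for `p < r`,
  `(1 - X) ∑_m c_{n+1}(rm + p) X^m = ∑_{a < r} X^[p < a] ∑_m c_n(rm + a) X^m`,
which is exactly how the ascent polynomial of words preceded by the letter `p` decomposes
according to the first letter `a`. Induction on `n`, with `p` arbitrary, and `p = 0` at the end.
-/

open scoped Classical

noncomputable section

/-- Entry of a word `u : Fin m → ℕ` at a natural index (junk value `0` out of range). -/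
def uv {m : ℕ} (u : Fin m → ℕ) (k : ℕ) : ℕ :=
  if h : k < m then u ⟨k, h⟩ else 0

/-- The number of ascents of the word `w = (w_1, …, w_m)` given by `u : Fin m → ℕ`
(so `w_{i+1} = u i`), with the convention `w_0 = 0`: the number of indices
`i ∈ {0,…,m-1}` with `w_i < w_{i+1}`. -/
def asc' {m : ℕ} (u : Fin m → ℕ) : ℕ :=
  ((Finset.range m).filter fun i =>
    (if i = 0 then 0 else uv u (i - 1)) < uv u i).card

open Finset PowerSeries

section Words

variable {n : ℕ}

-- `asc'` with the convention `w_0 = p` in place of `w_0 = 0`.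
def ascentsFrom (p : ℕ) (u : Fin n → ℕ) : ℕ :=
  #{i ∈ range n | (if i = 0 then p else uv u (i - 1)) < uv u i}

lemma uv_cons (a : ℕ) (w : Fin n → ℕ) (k : ℕ) :
    uv (Fin.cons a w : Fin (n + 1) → ℕ) k = if k = 0 then a else uv w (k - 1) := by
  rcases k with _ | k
  · simp [uv]
  · simp only [uv, add_lt_add_iff_right, Nat.add_sub_cancel, add_eq_zero, one_ne_zero,
      and_false, if_false]
    split_ifs <;> rfl

lemma ascentsFrom_cons (p a : ℕ) (w : Fin n → ℕ) :
    ascentsFrom p (Fin.cons a w : Fin (n + 1) → ℕ) =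
      (if p < a then 1 else 0) + ascentsFrom a w := by
  simp only [ascentsFrom, card_filter, sum_range_succ', uv_cons]
  rw [add_comm]
  congr 1

lemma sum_piFinset_const_succ {α M : Type*} [AddCommMonoid M] (s : Finset α)
    (f : (Fin (n + 1) → α) → M) :
    ∑ w ∈ Fintype.piFinset (fun _ => s), f w =
      ∑ a ∈ s, ∑ w ∈ Fintype.piFinset (fun _ : Fin n => s), f (Fin.cons a w) := by
  have h := filter_piFinset_eq_map_consEquiv (fun _ : Fin (n + 1) => s) (fun _ => True)
  simp only [filter_true] at h
  rw [h, sum_map, sum_product]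
  rfl

end Words

-- The window `(rm + p, r(m + 1) + p]` holds one number of each residue `a < r`:
-- `rm + a` if `p < a`, and `r(m + 1) + a` otherwise.
lemma sum_range_mul_succ_add_add_one {M : Type*} [AddCommMonoid M] (c : ℕ → M) {r p : ℕ}
    (hp : p < r) (m : ℕ) :
    ∑ t ∈ range (r * (m + 1) + p + 1), c t =
      ∑ t ∈ range (r * m + p + 1), c t +
        ∑ a ∈ range r, if p < a then c (r * m + a) else c (r * (m + 1) + a) := by
  obtain ⟨k, hk⟩ := Nat.exists_eq_add_of_lt hp
  have hlen : r * (m + 1) + p + 1 = r * m + p + 1 + r := by ring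
  have hwindow : ∑ j ∈ range r, c (r * m + p + 1 + j) =
      ∑ a ∈ range r, if p < a then c (r * m + a) else c (r * (m + 1) + a) := by
    calc ∑ j ∈ range r, c (r * m + p + 1 + j)
        = ∑ j ∈ range (k + (p + 1)), c (r * m + p + 1 + j) := by
          rw [hk, add_right_comm, add_comm]
      _ = ∑ i ∈ range (p + 1), c (r * (m + 1) + i) +
            ∑ i ∈ range k, c (r * m + (p + 1 + i)) := by
        rw [sum_range_add, add_comm]
        congr 1 <;> refine sum_congr rfl fun i _ => congrArg c ?_ <;> grind
      _ = ∑ a ∈ range (p + 1 + k), if p < a then c (r * m + a) else c (r * (m + 1) + a) := by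
        rw [sum_range_add _ (p + 1) k]
        refine congrArg₂ (· + ·) (sum_congr rfl fun i hi => ?_) (sum_congr rfl fun i _ => ?_)
        · rw [if_neg (by simp at hi; omega)]
        · rw [if_pos (by omega)]
      _ = _ := by rw [add_right_comm, ← hk]
  rw [hlen, sum_range_add, hwindow]

section SeriesIdentity

variable {R : Type*} [CommRing R]

lemma coeff_one_sub_X_mul_zero (φ : R⟦X⟧) : coeff 0 ((1 - X) * φ) = coeff 0 φ := by
  simp [sub_mul]

lemma coeff_one_sub_X_mul_succ (φ : R⟦X⟧) (m : ℕ) :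
    coeff (m + 1) ((1 - X) * φ) = coeff (m + 1) φ - coeff m φ := by
  rw [sub_mul, one_mul, map_sub, coeff_succ_X_mul]

lemma one_sub_X_mul_mk_sum_range (c : ℕ → R) {r p : ℕ} (hp : p < r) :
    (1 - X : R⟦X⟧) * PowerSeries.mk (fun m => ∑ t ∈ range (r * m + p + 1), c t) =
      ∑ a ∈ range r,
        X ^ (if p < a then 1 else 0) * PowerSeries.mk (fun m => c (r * m + a)) := by
  ext m
  rcases m with _ | m
  · have hlow : {a ∈ range r | ¬p < a} = range (p + 1) := by
      ext a; simp only [mem_filter, mem_range]; omega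
    have hterm (a : ℕ) : coeff 0 (X ^ (if p < a then 1 else 0) *
        PowerSeries.mk fun m => c (r * m + a)) = if ¬p < a then c a else 0 := by
      split_ifs <;> simp_all
    rw [coeff_one_sub_X_mul_zero, coeff_mk, map_sum, sum_congr rfl fun a _ => hterm a,
      ← sum_filter, hlow, mul_zero, zero_add]
  · rw [coeff_one_sub_X_mul_succ, coeff_mk, coeff_mk, sum_range_mul_succ_add_add_one c hp,
      add_sub_cancel_left, map_sum]
    refine sum_congr rfl fun a _ => ?_
    split_ifs <;> simp

theorem one_sub_X_pow_mul_mk_choose {r p : ℕ} (hp : p < r) (n : ℕ) :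
    (1 - X : R⟦X⟧) ^ (n + 1) * PowerSeries.mk (fun m => ((r * m + p + n).choose n : R)) =
      ∑ w ∈ Fintype.piFinset fun _ : Fin n => range r, X ^ ascentsFrom p w := by
  induction n generalizing p with
  | zero =>
    rw [zero_add, pow_one, mul_comm]
    simp only [Nat.choose_zero_right, Nat.cast_one]
    exact (mk_one_mul_one_sub_eq_one R).trans (by simp [ascentsFrom])
  | succ n ih =>
    have hockey (m : ℕ) : ((r * m + p + (n + 1)).choose (n + 1) : R) =
        ∑ t ∈ range (r * m + p + 1), ((t + n).choose n : R) := by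
      rw [← Nat.cast_sum, Nat.sum_range_add_choose, ← add_assoc]
    calc (1 - X : R⟦X⟧) ^ (n + 1 + 1) *
          PowerSeries.mk (fun m => ((r * m + p + (n + 1)).choose (n + 1) : R))
        = (1 - X) ^ (n + 1) * ((1 - X) *
            PowerSeries.mk (fun m => ∑ t ∈ range (r * m + p + 1), ((t + n).choose n : R))) := by
          simp only [hockey, pow_succ, mul_assoc]
      _ = ∑ a ∈ range r, X ^ (if p < a then 1 else 0) * ((1 - X) ^ (n + 1) *
            PowerSeries.mk (fun m => ((r * m + a + n).choose n : R))) := by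
          rw [one_sub_X_mul_mk_sum_range _ hp, mul_sum]
          exact sum_congr rfl fun _ _ => mul_left_comm _ _ _
      _ = ∑ a ∈ range r, ∑ w ∈ Fintype.piFinset fun _ : Fin n => range r,
            X ^ ascentsFrom p (Fin.cons a w : Fin (n + 1) → ℕ) := by
          refine sum_congr rfl fun a ha => ?_
          rw [ih (mem_range.1 ha), mul_sum]
          simp only [ascentsFrom_cons, pow_add]
      _ = _ := (sum_piFinset_const_succ (range r) fun w => X ^ ascentsFrom p w).symm

end SeriesIdentity

theorem choose_series_eq_ascent_polynomial_general (n r : ℕ) (hr : 0 < r) :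
    (1 - PowerSeries.X : PowerSeries ℤ) ^ (n + 1) *
        PowerSeries.mk (fun m => ((n + r * m).choose n : ℤ)) =
      ∑ u ∈ Fintype.piFinset fun _ : Fin n => Finset.range r,
        (PowerSeries.X : PowerSeries ℤ) ^ asc' u := by
  have h := one_sub_X_pow_mul_mk_choose (R := ℤ) hr n
  simp only [add_zero, add_comm _ n] at h
  exact h

/-- In `ℤ[[X]]`: `(1-X)^{n+1} · Σ_{m≥0} C(n+rm, n) X^m = Σ_{w ∈ {0,…,r-1}^n} X^{asc w}`. -/
theorem choose_series_eq_ascent_polynomial (n r : ℕ) (hn : 0 < n) (hr : 0 < r) :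
    (1 - PowerSeries.X : PowerSeries ℤ) ^ (n + 1) *
        PowerSeries.mk (fun m => ((n + r * m).choose n : ℤ)) =
      ∑ u ∈ Fintype.piFinset fun _ : Fin n => Finset.range r,
        (PowerSeries.X : PowerSeries ℤ) ^ asc' u :=
  choose_series_eq_ascent_polynomial_general n r hr
end
end

section
/- Let n and r be positive integers. For every natural number m, C(n + rm, n) = Σ_w C(n + m − asc(w), n), where the sum is over all words w = (w_1, …, w_n) ∈ {0,1,…,r−1}^n with asc(w) ≤ m. -/
open scoped Classical

noncomputable section

/-- Partial ascent count: ascents among positions `0,…,k-1`. -/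
def AA {n : ℕ} (u : Fin n → ℕ) (k : ℕ) : ℕ :=
  ((Finset.range k).filter fun i => (if i = 0 then 0 else uv u (i - 1)) < uv u i).card

lemma asc'_eq_AA {n : ℕ} (u : Fin n → ℕ) : asc' u = AA u n := rfl

lemma uv_coe {n : ℕ} (c : Fin n → ℕ) (i : Fin n) : uv c i = c i := by
  simp [uv]

lemma AA_succ {n : ℕ} (u : Fin n → ℕ) (k : ℕ) :
    AA u (k+1) = AA u k + (if (if k = 0 then 0 else uv u (k - 1)) < uv u k then 1 else 0) := by
  have hk : k ∉ Finset.filter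
      (fun i => (if i = 0 then 0 else uv u (i - 1)) < uv u i) (Finset.range k) := by simp
  rw [AA, Finset.range_add_one, Finset.filter_insert, AA]
  by_cases h : (if k = 0 then 0 else uv u (k - 1)) < uv u k
  · rw [if_pos h, if_pos h, Finset.card_insert_of_notMem hk]
  · rw [if_neg h, if_neg h]; omega

lemma AA_zero {n : ℕ} (u : Fin n → ℕ) : AA u 0 = 0 := by simp [AA]

lemma AA_mono {n : ℕ} (u : Fin n → ℕ) {k l : ℕ} (h : k ≤ l) : AA u k ≤ AA u l := by
  apply Finset.card_le_card
  exact Finset.filter_subset_filter _ (Finset.range_subset_range.2 h)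

/-- If the `i`-th letter (0-based) of the word is positive then there is an ascent
among positions `0,…,i`. -/
lemma AA_pos {n : ℕ} (u : Fin n → ℕ) : ∀ i, 0 < uv u i → 1 ≤ AA u (i+1) := by
  intro i
  induction i with
  | zero =>
    intro hpos
    rw [AA_succ, AA_zero]
    simp [hpos]
  | succ i ih =>
    intro hpos
    rw [AA_succ]
    by_cases h : (if i + 1 = 0 then 0 else uv u (i + 1 - 1)) < uv u (i+1)
    · rw [if_pos h]; omega
    · rw [if_neg h]
      simp only [Nat.succ_ne_zero, if_false, Nat.add_sub_cancel] at h
      exact ih (by omega)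

/-- Monotonicity from consecutive inequalities (stated via `uv`). -/
lemma mono_of_uv {n : ℕ} {c : Fin n → ℕ}
    (h : ∀ i, 0 < i → i < n → uv c (i-1) ≤ uv c i) : Monotone c := by
  have key : ∀ l k, k + l < n → uv c k ≤ uv c (k + l) := by
    intro l
    induction l with
    | zero => intro k _; simp
    | succ l ih =>
      intro k hk
      have h1 := ih k (by omega)
      have h2 := h (k+l+1) (by omega) (by omega)
      rw [Nat.add_sub_cancel] at h2
      calc uv c k ≤ uv c (k+l) := h1
        _ ≤ uv c (k+l+1) := h2
  intro i j hij
  have hij' : (i : ℕ) ≤ (j : ℕ) := hij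
  have := key ((j : ℕ) - (i : ℕ)) (i : ℕ) (by omega)
  rw [show (i : ℕ) + ((j : ℕ) - (i : ℕ)) = (j : ℕ) by omega] at this
  rwa [uv_coe, uv_coe] at this

/-- `ok u b` : the chain conditions for `b` relative to the word `u`. -/
def ok {n : ℕ} (u b : Fin n → ℕ) : Prop :=
  ∀ i < n, (if i = 0 then 0 else uv b (i - 1)) +
    (if (if i = 0 then 0 else uv u (i - 1)) < uv u i then 1 else 0) ≤ uv b i

lemma ok_AA_le {n : ℕ} {u b : Fin n → ℕ} (h : ok u b) :
    ∀ k ≤ n, AA u k ≤ (if k = 0 then 0 else uv b (k-1)) := by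
  intro k
  induction k with
  | zero => intro _; simp [AA_zero]
  | succ k ih =>
    intro hk
    have h1 := ih (by omega)
    have h2 := h k (by omega)
    rw [AA_succ]
    simp only [Nat.succ_ne_zero, if_false, Nat.add_sub_cancel]
    omega

lemma ok_AA_le' {n : ℕ} {u b : Fin n → ℕ} (h : ok u b) (i : Fin n) :
    AA u ((i : ℕ) + 1) ≤ b i := by
  have := ok_AA_le h ((i : ℕ)+1) (by omega)
  simp only [Nat.succ_ne_zero, if_false, Nat.add_sub_cancel] at this
  rwa [uv_coe] at this

lemma mem_pf {n M : ℕ} {f : Fin n → ℕ} :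
    f ∈ Fintype.piFinset (fun _ : Fin n => Finset.range M) ↔ ∀ i, f i < M := by
  simp

lemma strictMono_le_apply {n : ℕ} {f : Fin n → ℕ} (hf : StrictMono f) :
    ∀ k (hk : k < n), k ≤ f ⟨k, hk⟩ := by
  intro k
  induction k with
  | zero => intro _; omega
  | succ k ih =>
    intro hk
    have h1 := ih (by omega)
    have h2 : f ⟨k, by omega⟩ < f ⟨k+1, hk⟩ := hf (by simp [Fin.lt_def])
    omega

lemma card_mono (n M : ℕ) (hn : 0 < n) :
    ((Fintype.piFinset fun _ : Fin n => Finset.range (M+1)).filter fun c => Monotone c).card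
      = (n + M).choose n := by
  have hgoal : (n + M).choose n = ((Finset.range (n+M)).powersetCard n).card := by
    rw [Finset.card_powersetCard, Finset.card_range]
  rw [hgoal]
  refine Finset.card_bij'
    (fun c _ => Finset.image (fun i : Fin n => c i + (i : ℕ)) Finset.univ)
    (fun s hs => fun i : Fin n =>
      (s.orderEmbOfFin (Finset.mem_powersetCard.mp hs).2) i - (i : ℕ)) ?_ ?_ ?_ ?_
  · -- image lands in powersetCard
    intro c hc
    rw [Finset.mem_filter] at hc
    obtain ⟨hc1, hc2⟩ := hc
    have hcb : ∀ i : Fin n, c i ≤ M := by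
      intro i
      have := (mem_pf.mp hc1) i
      omega
    have hsm : StrictMono (fun i : Fin n => c i + (i : ℕ)) := by
      intro i j hij
      exact Nat.add_lt_add_of_le_of_lt (hc2 hij.le) hij
    rw [Finset.mem_powersetCard]
    constructor
    · intro x hx
      rw [Finset.mem_image] at hx
      obtain ⟨i, _, rfl⟩ := hx
      rw [Finset.mem_range]
      have := hcb i
      have : (i : ℕ) < n := i.isLt
      omega
    · rw [Finset.card_image_of_injective _ hsm.injective, Finset.card_univ, Fintype.card_fin]
  · -- inverse lands in the filter
    intro s hs
    set e := s.orderEmbOfFin (Finset.mem_powersetCard.mp hs).2 with he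
    have hsub : s ⊆ Finset.range (n + M) := (Finset.mem_powersetCard.mp hs).1
    have hmem : ∀ i : Fin n, e i < n + M := by
      intro i
      have := hsub (Finset.orderEmbOfFin_mem s (Finset.mem_powersetCard.mp hs).2 i)
      rwa [Finset.mem_range] at this
    have hle : ∀ i : Fin n, (i : ℕ) ≤ e i := fun i => by
      have := strictMono_le_apply e.strictMono i (i.isLt); simpa using this
    have hmono : Monotone (fun i : Fin n => e i - (i : ℕ)) := by
      apply mono_of_uv
      intro i hi0 hin
      rw [uv, uv, dif_pos (by omega : i - 1 < n), dif_pos hin]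
      have h1 : e ⟨i-1, by omega⟩ < e ⟨i, hin⟩ := e.strictMono (by simp [Fin.lt_def]; omega)
      have h2 := hle ⟨i-1, by omega⟩
      simp only at h1 h2 ⊢
      omega
    rw [Finset.mem_filter]
    refine ⟨mem_pf.mpr fun i => ?_, hmono⟩
    have hlast : e ⟨n-1, by omega⟩ - (n-1) ≤ M := by
      have h1 := hmem ⟨n-1, by omega⟩
      omega
    
    have h2 : (fun i : Fin n => e i - (i : ℕ)) i ≤ (fun i : Fin n => e i - (i : ℕ)) ⟨n-1, by omega⟩ :=
      hmono (by rw [Fin.le_def]; simp; omega)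
    simp only at h2
    omega
  · -- left inverse
    intro c hc
    rw [Finset.mem_filter] at hc
    obtain ⟨hc1, hc2⟩ := hc
    have hsm : StrictMono (fun i : Fin n => c i + (i : ℕ)) := by
      intro i j hij
      exact Nat.add_lt_add_of_le_of_lt (hc2 hij.le) hij
    funext i
    set s := Finset.image (fun i : Fin n => c i + (i : ℕ)) Finset.univ with hs
    have hcard : s.card = n := by
      rw [hs, Finset.card_image_of_injective _ hsm.injective, Finset.card_univ, Fintype.card_fin]
    have huniq := Finset.orderEmbOfFin_unique (f := fun i : Fin n => c i + (i : ℕ)) hcard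
      (fun x => Finset.mem_image_of_mem _ (Finset.mem_univ x)) hsm
    have : (Finset.orderEmbOfFin s hcard) i = c i + (i : ℕ) := by rw [← huniq]
    show (Finset.orderEmbOfFin s _) i - (i : ℕ) = c i
    rw [this]
    omega
  · -- right inverse
    intro s hs
    dsimp only
    set e := s.orderEmbOfFin (Finset.mem_powersetCard.mp hs).2 with he
    have hle : ∀ i : Fin n, (i : ℕ) ≤ e i := fun i => by
      have := strictMono_le_apply e.strictMono i (i.isLt); simpa using this
    have heq : (fun i : Fin n => e i - (i : ℕ) + (i : ℕ)) = fun i : Fin n => (e i : ℕ) := by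
      funext i
      have := hle i
      omega
    rw [heq]
    apply Finset.coe_injective
    rw [Finset.coe_image, Finset.coe_univ, Set.image_univ]
    exact Finset.range_orderEmbOfFin s (Finset.mem_powersetCard.mp hs).2
lemma uv_mk {n : ℕ} (c : Fin n → ℕ) {x : ℕ} (h : x < n) : uv c x = c ⟨x, h⟩ := dif_pos h

lemma card_ok (n m : ℕ) (hn : 0 < n) (u : Fin n → ℕ) (hu : asc' u ≤ m) :
    ((Fintype.piFinset fun _ : Fin n => Finset.range (m+1)).filter fun b => ok u b).card
      = (n + m - asc' u).choose n := by
  have hasc : asc' u = AA u n := rfl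
  have h1 : (n + m - asc' u).choose n = (n + (m - asc' u)).choose n := by congr 1; omega
  rw [h1, ← card_mono n (m - asc' u) hn]
  refine Finset.card_bij'
    (fun b _ => fun i : Fin n => b i - AA u ((i:ℕ)+1))
    (fun c _ => fun i : Fin n => c i + AA u ((i:ℕ)+1)) ?_ ?_ ?_ ?_
  · intro b hb
    rw [Finset.mem_filter] at hb
    obtain ⟨hb1, hb2⟩ := hb
    rw [mem_pf] at hb1
    have hmono : Monotone (fun i : Fin n => b i - AA u ((i:ℕ)+1)) := by
      apply mono_of_uv
      intro i hi0 hin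
      have hok := hb2 i hin
      rw [if_neg (by omega : ¬ i = 0)] at hok
      have hA1 := ok_AA_le hb2 i (by omega)
      rw [if_neg (by omega : ¬ i = 0)] at hA1
      have hAs := AA_succ u i
      rw [uv_mk _ hin, uv_mk _ (show i-1 < n by omega)]
      try simp only [Fin.val_mk]
      rw [show i - 1 + 1 = i by omega]
      rw [uv_mk b (show i-1 < n by omega)] at hok hA1
      rw [uv_mk b hin] at hok
      by_cases hd : (if i = 0 then 0 else uv u (i - 1)) < uv u i
      · rw [if_pos hd] at hok hAs; omega
      · rw [if_neg hd] at hok hAs; omega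
    rw [Finset.mem_filter]
    refine ⟨mem_pf.mpr fun i => ?_, hmono⟩
    have hlast : b i - AA u ((i:ℕ)+1)
        ≤ b ⟨n-1, by omega⟩ - AA u (((⟨n-1, by omega⟩ : Fin n) : ℕ)+1) :=
      hmono (show i ≤ ⟨n-1, by omega⟩ by rw [Fin.le_def]; try simp only [Fin.val_mk]; omega)
    try simp only [Fin.val_mk] at hlast
    rw [show n - 1 + 1 = n by omega] at hlast
    have hbl := hb1 ⟨n-1, by omega⟩
    show b i - AA u ((i:ℕ)+1) < m - asc' u + 1
    omega
  · intro c hc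
    rw [Finset.mem_filter] at hc
    obtain ⟨hc1, hc2⟩ := hc
    rw [mem_pf] at hc1
    have hAb : ∀ i : Fin n, AA u ((i:ℕ)+1) ≤ AA u n := fun i => AA_mono u (by omega)
    rw [Finset.mem_filter]
    constructor
    · rw [mem_pf]
      intro i
      have h2 := hc1 i
      have h3 := hAb i
      omega
    · intro i hin
      have hAs := AA_succ u i
      rw [uv_mk (fun i : Fin n => c i + AA u ((i:ℕ)+1)) hin]
      try simp only [Fin.val_mk]
      by_cases h0 : i = 0
      · subst h0
        rw [if_pos rfl]
        rw [AA_zero] at hAs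
        by_cases hd : (if 0 = 0 then 0 else uv u (0 - 1)) < uv u 0
        · rw [if_pos hd] at hAs ⊢; omega
        · rw [if_neg hd] at hAs ⊢; omega
      · rw [if_neg h0, uv_mk (fun i : Fin n => c i + AA u ((i:ℕ)+1)) (show i-1 < n by omega)]
        try simp only [Fin.val_mk]
        rw [show i - 1 + 1 = i by omega]
        have hmc : c ⟨i-1, by omega⟩ ≤ c ⟨i, hin⟩ :=
          hc2 (show (⟨i-1, by omega⟩ : Fin n) ≤ ⟨i, hin⟩ by
            rw [Fin.le_def]; try simp only [Fin.val_mk]; omega)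
        by_cases hd : (if i = 0 then 0 else uv u (i - 1)) < uv u i
        · rw [if_pos hd] at hAs ⊢; omega
        · rw [if_neg hd] at hAs ⊢; omega
  · intro b hb
    rw [Finset.mem_filter] at hb
    have hA : ∀ i : Fin n, AA u ((i:ℕ)+1) ≤ b i := ok_AA_le' hb.2
    funext i
    show b i - AA u ((i:ℕ)+1) + AA u ((i:ℕ)+1) = b i
    have := hA i
    omega
  · intro c _
    funext i
    show c i + AA u ((i:ℕ)+1) - AA u ((i:ℕ)+1) = c i
    omega
/-- For every `m`, `C(n + rm, n) = Σ_w C(n + m - asc w, n)`, the sum being over all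
words `w ∈ {0,…,r-1}^n` with `asc w ≤ m`. -/
theorem choose_eq_sum_choose_ascents (n r : ℕ) (hn : 0 < n) (hr : 0 < r) (m : ℕ) :
    (n + r * m).choose n =
      ∑ u ∈ (Fintype.piFinset fun _ : Fin n => Finset.range r).filter
        fun u => asc' u ≤ m, (n + m - asc' u).choose n := by
  obtain ⟨Q, hQ1, hQw, hQ3, hQ4, hQ7, hQ9, hQ8⟩ :
      ∃ Q : ℕ → ℕ,
        (∀ x, x ≤ r * Q x) ∧
        (∀ x, r * Q x - x < r) ∧
        (∀ x y, x ≤ y → Q x ≤ Q y) ∧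
        (∀ x, x ≤ r * m → Q x ≤ m) ∧
        (∀ x y, x ≤ y → r * Q x - x < r * Q y - y → Q x < Q y) ∧
        (∀ x, 0 < r * Q x - x → 0 < Q x) ∧
        (∀ B U, U < r → U ≤ r * B → Q (r * B - U) = B) := by
    refine ⟨fun x => (x + (r-1))/r, ?_, ?_, ?_, ?_, ?_, ?_, ?_⟩ <;> beta_reduce
    · intro x
      have hd := Nat.div_add_mod (x + (r-1)) r
      have hm := Nat.mod_lt (x + (r-1)) hr
      omega
    · intro x
      have hd := Nat.div_add_mod (x + (r-1)) r
      omega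
    · intro x y h
      exact Nat.div_le_div_right (by omega)
    · intro x hx
      have hd := Nat.div_add_mod (x + (r-1)) r
      have h3 : r * (m+1) = r * m + r := by ring
      have h4 : r * ((x + (r-1))/r) < r * (m+1) := by omega
      exact Nat.lt_succ_iff.mp (Nat.lt_of_mul_lt_mul_left h4)
    · intro x y hxy hlt
      rcases Nat.lt_or_ge ((x+(r-1))/r) ((y+(r-1))/r) with h|h
      · exact h
      · exfalso
        have heq : (x+(r-1))/r = (y+(r-1))/r :=
          le_antisymm (Nat.div_le_div_right (by omega)) h
        have hmul : r * ((x+(r-1))/r) = r * ((y+(r-1))/r) := by rw [heq]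
        have h1 := Nat.div_add_mod (x + (r-1)) r
        have h2 := Nat.div_add_mod (y + (r-1)) r
        have hm1 := Nat.mod_lt (x + (r-1)) hr
        have hm2 := Nat.mod_lt (y + (r-1)) hr
        omega
    · intro x h
      rcases Nat.eq_zero_or_pos ((x+(r-1))/r) with h0|h0
      · rw [h0, Nat.mul_zero] at h; omega
      · exact h0
    · intro B U hU hUB
      rw [show r * B - U + (r-1) = r * B + (r - 1 - U) by omega, Nat.mul_add_div hr,
        Nat.div_eq_of_lt (by omega), add_zero]
  have hq10 : ∀ x y : ℕ, x ≤ y → r * x ≤ r * y := fun x y h => Nat.mul_le_mul_left r h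
  have hq11 : ∀ x : ℕ, r * (x+1) = r * x + r := fun x => by ring
  calc (n + r * m).choose n
      = ((Fintype.piFinset fun _ : Fin n => Finset.range (r*m+1)).filter
          fun c => Monotone c).card := (card_mono n (r*m) hn).symm
    _ = (((Fintype.piFinset fun _ : Fin n => Finset.range r).filter
          fun u => asc' u ≤ m).sigma fun u =>
            (Fintype.piFinset fun _ : Fin n => Finset.range (m+1)).filter
              fun b => ok u b).card := by
        refine Finset.card_bij'
          (fun a _ => (⟨fun i : Fin n => r * Q (a i) - a i,
            fun i : Fin n => Q (a i)⟩ : (_ : Fin n → ℕ) × (Fin n → ℕ)))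
          (fun p _ => fun i : Fin n => r * p.2 i - p.1 i) ?_ ?_ ?_ ?_
        · -- forward membership
          intro a ha
          rw [Finset.mem_filter] at ha
          obtain ⟨ha1, ha2⟩ := ha
          rw [mem_pf] at ha1
          have hok : ok (fun i : Fin n => r * Q (a i) - a i) (fun i : Fin n => Q (a i)) := by
            intro i hin
            by_cases h0 : i = 0
            · subst h0
              simp only [↓reduceIte]
              rw [uv_mk (fun i : Fin n => r * Q (a i) - a i) hin,
                uv_mk (fun i : Fin n => Q (a i)) hin]
              split
              · next hc =>
                  have h9 := hQ9 _ hc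
                  omega
              · exact Nat.zero_le _
            · have hi1 : i - 1 < n := by omega
              simp only [if_neg h0]
              rw [uv_mk (fun i : Fin n => r * Q (a i) - a i) hin,
                uv_mk (fun i : Fin n => r * Q (a i) - a i) hi1,
                uv_mk (fun i : Fin n => Q (a i)) hin,
                uv_mk (fun i : Fin n => Q (a i)) hi1]
              have hma : a ⟨i-1, hi1⟩ ≤ a ⟨i, hin⟩ := by
                apply ha2
                rw [Fin.le_def]
                simp only [Fin.val_mk]
                omega
              split
              · next hc =>
                  have h7 := hQ7 _ _ hma hc
                  omega
              · have h3 := hQ3 _ _ hma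
                omega
          rw [Finset.mem_sigma]
          dsimp only
          constructor
          · rw [Finset.mem_filter]
            constructor
            · rw [mem_pf]
              intro i
              show r * Q (a i) - a i < r
              exact hQw (a i)
            · have hAn := ok_AA_le hok n le_rfl
              rw [if_neg (show ¬ n = 0 by omega)] at hAn
              have hn1 : n - 1 < n := by omega
              rw [uv_mk (fun i : Fin n => Q (a i)) hn1] at hAn
              have h4 := hQ4 (a ⟨n-1, hn1⟩) (by have := ha1 ⟨n-1, hn1⟩; omega)
              have he : asc' (fun i : Fin n => r * Q (a i) - a i)
                  = AA (fun i : Fin n => r * Q (a i) - a i) n := rfl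
              omega
          · rw [Finset.mem_filter]
            refine ⟨mem_pf.mpr fun i => ?_, hok⟩
            show Q (a i) < m + 1
            have := hQ4 (a i) (by have := ha1 i; omega)
            omega
        · -- backward membership
          intro p hp
          obtain ⟨u, b⟩ := p
          rw [Finset.mem_sigma, Finset.mem_filter, Finset.mem_filter] at hp
          obtain ⟨⟨hu1, hu2⟩, hb1, hb2⟩ := hp
          dsimp only at hu1 hu2 hb1 hb2
          rw [mem_pf] at hu1 hb1
          dsimp only
          rw [Finset.mem_filter]
          constructor
          · rw [mem_pf]
            intro i
            show r * b i - u i < r * m + 1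
            have := hq10 (b i) m (by have := hb1 i; omega)
            omega
          · apply mono_of_uv
            intro i hi0 hin
            have hi1 : i - 1 < n := by omega
            have hok := hb2 i hin
            rw [if_neg (show ¬ i = 0 by omega), if_neg (show ¬ i = 0 by omega)] at hok
            rw [uv_mk (fun i : Fin n => r * b i - u i) hin,
              uv_mk (fun i : Fin n => r * b i - u i) hi1]
            rw [uv_mk b hin, uv_mk b hi1, uv_mk u hin, uv_mk u hi1] at hok
            have hui := hu1 ⟨i, hin⟩
            split at hok
            · next hc =>
                have h5 := hq10 (b ⟨i-1, hi1⟩ + 1) (b ⟨i, hin⟩) (by omega)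
                have h6 := hq11 (b ⟨i-1, hi1⟩)
                omega
            · next hc =>
                have h5 := hq10 (b ⟨i-1, hi1⟩) (b ⟨i, hin⟩) (by omega)
                omega
        · -- left inverse
          intro a ha
          dsimp only
          funext i
          show r * Q (a i) - (r * Q (a i) - a i) = a i
          have := hQ1 (a i)
          omega
        · -- right inverse
          intro p hp
          obtain ⟨u, b⟩ := p
          rw [Finset.mem_sigma, Finset.mem_filter, Finset.mem_filter] at hp
          obtain ⟨⟨hu1, hu2⟩, hb1, hb2⟩ := hp
          dsimp only at hu1 hu2 hb1 hb2
          rw [mem_pf] at hu1 hb1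
          have hkey : ∀ i : Fin n, u i ≤ r * b i := by
            intro i
            rcases Nat.eq_zero_or_pos (u i) with h|h
            · omega
            · have h1 : 1 ≤ AA u ((i:ℕ)+1) := AA_pos u (i:ℕ) (by rwa [uv_coe])
              have h2 := ok_AA_le' hb2 i
              have h3 := hq10 1 (b i) (by omega)
              rw [Nat.mul_one] at h3
              have := hu1 i
              omega
          dsimp only
          refine Sigma.ext ?_ (heq_of_eq (funext fun i => ?_))
          · funext i
            show r * Q (r * b i - u i) - (r * b i - u i) = u i
            rw [hQ8 (b i) (u i) (hu1 i) (hkey i)]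
            have := hkey i
            omega
          · show Q (r * b i - u i) = b i
            exact hQ8 (b i) (u i) (hu1 i) (hkey i)
    _ = ∑ u ∈ (Fintype.piFinset fun _ : Fin n => Finset.range r).filter
          fun u => asc' u ≤ m,
            ((Fintype.piFinset fun _ : Fin n => Finset.range (m+1)).filter
              fun b => ok u b).card := Finset.card_sigma _ _
    _ = ∑ u ∈ (Fintype.piFinset fun _ : Fin n => Finset.range r).filter
          fun u => asc' u ≤ m, (n + m - asc' u).choose n := by
        apply Finset.sum_congr rfl
        intro u hu
        rw [Finset.mem_filter] at hu
        exact card_ok n m hn u hu.2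
end
end

section
/- Let n and r be positive integers. For every natural number k, the coefficient of X^{rk} in the polynomial (1 + X + X^2 + ... + X^{r−1})^n ∈ ℤ[X] equals the number of words w = (w_1, …, w_{n−1}) ∈ {0,1,…,r−1}^{n−1} with exactly k ascents. -/
open scoped Classical

noncomputable section

/-- previous value of the word, with `w_0 = 0` convention -/
def pv {m : ℕ} (u : Fin m → ℕ) (t : ℕ) : ℕ := if t = 0 then 0 else uv u (t - 1)

lemma pv_succ {m : ℕ} (u : Fin m → ℕ) (t : ℕ) : pv u (t + 1) = uv u t := by
  simp [pv]

lemma uv_lt {m r : ℕ} (hr : 0 < r) {u : Fin m → ℕ} (hu : ∀ j, u j < r) (t : ℕ) :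
    uv u t < r := by
  unfold uv; split
  · exact hu _
  · exact hr

lemma pv_lt {m r : ℕ} (hr : 0 < r) {u : Fin m → ℕ} (hu : ∀ j, u j < r) (t : ℕ) :
    pv u t < r := by
  unfold pv; split
  · exact hr
  · exact uv_lt hr hu _

/-- the tuple associated to a word -/
def toA (r : ℕ) {m : ℕ} (u : Fin m → ℕ) : Fin (m + 1) → ℕ := fun i =>
  if (i : ℕ) < m then pv u i + (if pv u i < uv u i then r else 0) - uv u i
  else pv u m

lemma toA_lt {m r : ℕ} (hr : 0 < r) {u : Fin m → ℕ} (hu : ∀ j, u j < r) (i : Fin (m + 1)) :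
    toA r u i < r := by
  unfold toA
  split
  · by_cases hA : pv u (i : ℕ) < uv u (i : ℕ)
    · simp only [hA, if_true]
      have := uv_lt hr hu (i : ℕ)
      omega
    · simp only [hA, if_false]
      have := pv_lt hr hu (i : ℕ)
      omega
  · exact pv_lt hr hu m

lemma uv_toA_lt {m r : ℕ} (hr : 0 < r) {u : Fin m → ℕ} (hu : ∀ j, u j < r) (t : ℕ)
    (ht : t < m) : uv (toA r u) t = pv u t + (if pv u t < uv u t then r else 0) - uv u t := by
  have ht' : t < m + 1 := Nat.lt_succ_of_lt ht
  simp [uv, toA, ht, ht']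

/-- telescoping partial sums of `toA` -/
lemma sum_toA_range {m r : ℕ} (hr : 0 < r) {u : Fin m → ℕ} (hu : ∀ j, u j < r) :
    ∀ t, t ≤ m → ∑ i ∈ Finset.range t, (uv (toA r u) i : ℤ)
      = r * (((Finset.range t).filter fun i => pv u i < uv u i).card) - pv u t := by
  intro t
  induction t with
  | zero => simp [pv]; exact Or.inr (Finset.filter_empty _)
  | succ t ih =>
    intro ht
    have htm : t < m := ht
    rw [Finset.sum_range_succ, ih (le_of_lt htm), uv_toA_lt hr hu t htm,
      Finset.range_add_one, Finset.filter_insert]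
    by_cases hA : pv u t < uv u t
    · simp only [hA, if_true]
      rw [Finset.card_insert_of_notMem (by simp)]
      have hle : uv u t ≤ pv u t + r := le_of_lt (by have := uv_lt hr hu t; omega)
      rw [pv_succ, Nat.cast_sub hle]
      push_cast
      ring
    · simp only [hA, if_false]
      have hle : uv u t ≤ pv u t + 0 := by omega
      rw [pv_succ, Nat.cast_sub hle]
      push_cast
      ring_nf

lemma asc'_eq {m : ℕ} (u : Fin m → ℕ) :
    asc' u = ((Finset.range m).filter fun i => pv u i < uv u i).card := rfl

lemma fin_sum_uv {m : ℕ} (f : Fin m → ℕ) :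
    (∑ i : Fin m, (f i : ℤ)) = ∑ i ∈ Finset.range m, (uv f i : ℤ) := by
  rw [← Fin.sum_univ_eq_sum_range (fun t => (uv f t : ℤ)) m]
  refine Finset.sum_congr rfl fun i _ => ?_
  simp [uv, i.isLt]

lemma sum_toA {m r : ℕ} (hr : 0 < r) {u : Fin m → ℕ} (hu : ∀ j, u j < r) :
    ∑ i : Fin (m + 1), toA r u i = r * asc' u := by
  have : (∑ i : Fin (m + 1), (toA r u i : ℤ)) = (r * asc' u : ℕ) := by
    rw [fin_sum_uv, Finset.sum_range_succ, sum_toA_range hr hu m le_rfl]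
    have huvm : uv (toA r u) m = pv u m := by
      simp [uv, toA]
    rw [huvm, asc'_eq]
    push_cast
    ring
  exact_mod_cast (by push_cast at this ⊢; exact this : ((∑ i : Fin (m+1), toA r u i : ℕ) : ℤ) = (r * asc' u : ℕ))

/-- the word associated to a tuple -/
def toW (r : ℕ) {m : ℕ} (a : Fin (m + 1) → ℕ) : Fin m → ℕ := fun j =>
  ((-(∑ i ∈ Finset.range ((j : ℕ) + 1), (uv a i : ℤ))) % r).toNat

lemma toW_cast {m r : ℕ} (hr : 0 < r) (a : Fin (m + 1) → ℕ) (j : Fin m) :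
    (toW r a j : ℤ) = (-(∑ i ∈ Finset.range ((j : ℕ) + 1), (uv a i : ℤ))) % r :=
  Int.toNat_of_nonneg (Int.emod_nonneg _ (by exact_mod_cast hr.ne'))

lemma toW_lt {m r : ℕ} (hr : 0 < r) (a : Fin (m + 1) → ℕ) (j : Fin m) :
    toW r a j < r := by
  have h1 := toW_cast hr a j
  have h2 : (-(∑ i ∈ Finset.range ((j : ℕ) + 1), (uv a i : ℤ))) % r < r :=
    Int.emod_lt_of_pos _ (by exact_mod_cast hr)
  omega

lemma pv_toW {m r : ℕ} (hr : 0 < r) (a : Fin (m + 1) → ℕ) (t : ℕ) (ht : t ≤ m) :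
    (pv (toW r a) t : ℤ) = (-(∑ i ∈ Finset.range t, (uv a i : ℤ))) % r := by
  cases t with
  | zero => simp [pv]
  | succ s =>
    have hs : s < m := ht
    have : pv (toW r a) (s + 1) = toW r a ⟨s, hs⟩ := by
      rw [pv_succ]; simp [uv, hs]
    rw [this, toW_cast hr a ⟨s, hs⟩]

lemma toW_toA {m r : ℕ} (hr : 0 < r) {u : Fin m → ℕ} (hu : ∀ j, u j < r) :
    toW r (toA r u) = u := by
  funext j
  have hj1 : (j : ℕ) + 1 ≤ m := j.isLt
  have key : (toW r (toA r u) j : ℤ) = u j := by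
    rw [toW_cast hr, sum_toA_range hr hu ((j : ℕ) + 1) hj1, pv_succ]
    have huvj : uv u (j : ℕ) = u j := by simp [uv, j.isLt]
    rw [huvj]
    have : -((r : ℤ) * (((Finset.range ((j:ℕ)+1)).filter fun i => pv u i < uv u i).card) - u j)
        = (u j : ℤ) + (r : ℤ) * (-(((Finset.range ((j:ℕ)+1)).filter fun i => pv u i < uv u i).card)) := by
      ring
    rw [this, Int.add_mul_emod_self_left]
    exact Int.emod_eq_of_lt (by positivity) (by exact_mod_cast hu j)
  exact_mod_cast key

lemma toA_toW {m r k : ℕ} (hr : 0 < r) (a : Fin (m + 1) → ℕ) (ha : ∀ i, a i < r)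
    (hsum : ∑ i : Fin (m + 1), a i = r * k) : toA r (toW r a) = a := by
  have hW : ∀ j, toW r a j < r := toW_lt hr a
  have hr' : (r : ℤ) ≠ 0 := by exact_mod_cast hr.ne'
  have hsumZ : ∑ i ∈ Finset.range (m + 1), (uv a i : ℤ) = r * k := by
    rw [← fin_sum_uv]; exact_mod_cast congrArg (Nat.cast : ℕ → ℤ) hsum
  funext i
  set S : ℕ → ℤ := fun t => ∑ i ∈ Finset.range t, (uv a i : ℤ) with hS
  have hT : ∀ t, 0 ≤ (-(S t)) % r ∧ (-(S t)) % r < r := fun t =>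
    ⟨Int.emod_nonneg _ hr', Int.emod_lt_of_pos _ (by exact_mod_cast hr)⟩
  have key : (toA r (toW r a) i : ℤ) = a i := by
    by_cases him : (i : ℕ) < m
    · have h1 : toA r (toW r a) i
          = pv (toW r a) i + (if pv (toW r a) i < uv (toW r a) i then r else 0) - uv (toW r a) i := by
        simp [toA, him]
      have hP : (pv (toW r a) (i : ℕ) : ℤ) = (-(S (i : ℕ))) % r := pv_toW hr a _ (le_of_lt him)
      have hC : (uv (toW r a) (i : ℕ) : ℤ) = (-(S ((i : ℕ) + 1))) % r := by
        have : uv (toW r a) (i : ℕ) = toW r a ⟨(i : ℕ), him⟩ := by simp [uv, him]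
        rw [this, toW_cast hr a ⟨(i : ℕ), him⟩]
      have hSi : S ((i : ℕ) + 1) = S (i : ℕ) + a i := by
        rw [hS]
        simp only
        rw [Finset.sum_range_succ]
        congr 1
        simp [uv, Nat.lt_succ_of_lt him, i.isLt]
      have hmod : ((-(S (i : ℕ))) % r - (-(S ((i : ℕ) + 1))) % r) % r = a i := by
        rw [← Int.sub_emod, hSi]
        have : -(S (i:ℕ)) - -(S (i:ℕ) + a i) = (a i : ℤ) := by ring
        rw [this]
        exact Int.emod_eq_of_lt (by positivity) (by exact_mod_cast ha i)
      have hPb := hT (i : ℕ)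
      have hCb := hT ((i : ℕ) + 1)
      have hai : (a i : ℤ) < r := by exact_mod_cast ha i
      have hai0 : (0 : ℤ) ≤ a i := by positivity
      rw [h1]
      by_cases hA : pv (toW r a) (i : ℕ) < uv (toW r a) (i : ℕ)
      · simp only [hA, if_true]
        have hle : uv (toW r a) (i : ℕ) ≤ pv (toW r a) (i : ℕ) + r := by
          have := uv_lt hr hW (i : ℕ); omega
        rw [Nat.cast_sub hle]
        push_cast
        rw [hP, hC]
        have hAZ : (-(S (i : ℕ))) % r < (-(S ((i : ℕ) + 1))) % r := by
          rw [← hP, ← hC]; exact_mod_cast hA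
        -- value = P + r - C, and (P - C) % r = a i with P < C, so P - C + r = a i
        have : ((-(S (i : ℕ))) % r - (-(S ((i : ℕ) + 1))) % r + r) % r = a i := by
          have hrw : (-(S (i : ℕ))) % r - (-(S ((i : ℕ) + 1))) % r + r
              = (-(S (i : ℕ))) % r - (-(S ((i : ℕ) + 1))) % r + r * 1 := by ring
          rw [hrw, Int.add_mul_emod_self_left]
          exact hmod
        have hrange : 0 ≤ (-(S (i : ℕ))) % r - (-(S ((i : ℕ) + 1))) % r + r ∧
            (-(S (i : ℕ))) % r - (-(S ((i : ℕ) + 1))) % r + r < r := by omega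
        rw [Int.emod_eq_of_lt hrange.1 hrange.2] at this
        omega
      · simp only [hA, if_false]
        have hle : uv (toW r a) (i : ℕ) ≤ pv (toW r a) (i : ℕ) + 0 := by omega
        rw [Nat.cast_sub (by omega : uv (toW r a) (i : ℕ) ≤ pv (toW r a) (i : ℕ) + 0)]
        push_cast
        rw [hP, hC]
        have hAZ : (-(S ((i : ℕ) + 1))) % r ≤ (-(S (i : ℕ))) % r := by
          have : uv (toW r a) (i : ℕ) ≤ pv (toW r a) (i : ℕ) := by omega
          rw [← hP, ← hC]; exact_mod_cast this
        have hrange : 0 ≤ (-(S (i : ℕ))) % r - (-(S ((i : ℕ) + 1))) % r ∧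
            (-(S (i : ℕ))) % r - (-(S ((i : ℕ) + 1))) % r < r := by omega
        rw [Int.emod_eq_of_lt hrange.1 hrange.2] at hmod
        omega
    · -- i = m
      have him' : (i : ℕ) = m := by have := i.isLt; omega
      have h1 : toA r (toW r a) i = pv (toW r a) m := by
        simp [toA, him, him']
      have hP : (pv (toW r a) m : ℤ) = (-(S m)) % r := pv_toW hr a m le_rfl
      have hSm : S m = r * k - a i := by
        have : S (m + 1) = S m + a i := by
          rw [hS]
          simp only
          rw [Finset.sum_range_succ]
          have huvm : uv a m = a i := by
            simp only [uv]
            rw [dif_pos (by omega : m < m + 1)]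
            exact congrArg a (Fin.ext him'.symm)
          rw [huvm]
        have h2 : S (m + 1) = r * k := hsumZ
        omega
      rw [h1, hP, hSm]
      have : -((r : ℤ) * k - a i) = (a i : ℤ) + (r : ℤ) * (-k) := by ring
      rw [this, Int.add_mul_emod_self_left]
      exact Int.emod_eq_of_lt (by positivity) (by exact_mod_cast ha i)
  exact_mod_cast key

lemma card_words_eq {m r k : ℕ} (hr : 0 < r) :
    ((Fintype.piFinset fun _ : Fin (m + 1) => Finset.range r).filter
        fun f => ∑ i, f i = r * k).card =
    ((Fintype.piFinset fun _ : Fin m => Finset.range r).filter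
        fun u => asc' u = k).card := by
  refine Finset.card_bij' (fun a _ => toW r a) (fun u _ => toA r u) ?_ ?_ ?_ ?_
  · intro a ha
    rw [Finset.mem_filter, Fintype.mem_piFinset] at ha ⊢
    obtain ⟨ha1, ha2⟩ := ha
    have ha1' : ∀ i, a i < r := fun i => Finset.mem_range.mp (ha1 i)
    refine ⟨fun j => Finset.mem_range.mpr (toW_lt hr a j), ?_⟩
    have h1 : toA r (toW r a) = a := toA_toW hr a ha1' ha2
    have h2 : ∑ i : Fin (m + 1), toA r (toW r a) i = r * asc' (toW r a) :=
      sum_toA hr (toW_lt hr a)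
    rw [h1, ha2] at h2
    exact (Nat.eq_of_mul_eq_mul_left hr h2.symm)
  · intro u hu
    rw [Finset.mem_filter, Fintype.mem_piFinset] at hu ⊢
    obtain ⟨hu1, hu2⟩ := hu
    have hu1' : ∀ j, u j < r := fun j => Finset.mem_range.mp (hu1 j)
    refine ⟨fun i => Finset.mem_range.mpr (toA_lt hr hu1' i), ?_⟩
    rw [sum_toA hr hu1', hu2]
  · intro a ha
    rw [Finset.mem_filter, Fintype.mem_piFinset] at ha
    exact toA_toW hr a (fun i => Finset.mem_range.mp (ha.1 i)) ha.2
  · intro u hu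
    rw [Finset.mem_filter, Fintype.mem_piFinset] at hu
    exact toW_toA hr (fun j => Finset.mem_range.mp (hu.1 j))

/-- The coefficient of `X^{rk}` in `(1 + X + ⋯ + X^{r-1})^n ∈ ℤ[X]` equals the number
of words `w ∈ {0,…,r-1}^{n-1}` with exactly `k` ascents. -/
theorem coeff_pow_eq_card_words (n r : ℕ) (hn : 0 < n) (hr : 0 < r) (k : ℕ) :
    ((∑ j ∈ Finset.range r, (Polynomial.X : Polynomial ℤ) ^ j) ^ n).coeff (r * k) =
      (((Fintype.piFinset fun _ : Fin (n - 1) => Finset.range r).filter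
        fun u => asc' u = k).card : ℤ) := by
  obtain ⟨m, rfl⟩ : ∃ m, n = m + 1 := ⟨n - 1, (Nat.succ_pred_eq_of_pos hn).symm⟩
  have hcoeff : ((∑ j ∈ Finset.range r, (Polynomial.X : Polynomial ℤ) ^ j) ^ (m + 1)).coeff (r * k)
      = (((Fintype.piFinset fun _ : Fin (m + 1) => Finset.range r).filter
          fun f => ∑ i, f i = r * k).card : ℤ) := by
    rw [← Fin.prod_const (m + 1) (∑ j ∈ Finset.range r, (Polynomial.X : Polynomial ℤ) ^ j),
      Finset.prod_univ_sum]
    simp_rw [Finset.prod_pow_eq_pow_sum]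
    rw [Polynomial.finset_sum_coeff]
    simp_rw [Polynomial.coeff_X_pow]
    rw [Finset.sum_boole]
    congr 1
    congr 1
    apply Finset.filter_congr
    intro f _
    constructor <;> (intro h; exact h.symm)
  rw [hcoeff]
  congr 1
  exact_mod_cast card_words_eq hr
end
end

section
/- Let n and r be positive integers. For every natural number k, Σ_{F ⊆ {1,…,n}} (−1)^{n−|F|} · N_F(k) equals the number of words w ∈ S(n,r) with exactly k ascents, where N_F(k) denotes the number of words w = (w_0, w_1, …, w_n) ∈ {0,1,…,r−1}^{n+1} satisfying w_0 = w_n = 0, w_{i−1} = w_i for every i ∈ {1,…,n} \ F, and having exactly k ascents. -/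
open scoped Classical

noncomputable section

/-! A word `w` is counted by `N_F(k)` exactly when its set of positions `i` with
`w_{i-1} ≠ w_i` is contained in `F`, and it is a Smirnov word exactly when that set is all of
`{1,…,n}`. Since `∑_{T ⊆ F ⊆ S} (-1)^{|S|-|F|}` vanishes unless `T = S`, the alternating sum
over `F` counts precisely the Smirnov words. -/

open Finset

section InclusionExclusion

variable {α ι : Type*} [DecidableEq ι]

theorem sum_Icc_neg_one_pow_card_sub_card (T S : Finset ι) :
    ∑ F ∈ Icc T S, (-1 : ℤ) ^ (#S - #F) = if T = S then 1 else 0 := by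
  by_cases hTS : T ⊆ S
  · calc ∑ F ∈ Icc T S, (-1 : ℤ) ^ (#S - #F)
        = ∑ G ∈ (S \ T).powerset, (-1 : ℤ) ^ #G := by
          refine sum_nbij' (S \ ·) (S \ ·) ?_ ?_ ?_ ?_ ?_
          · intro F hF
            simp only [mem_Icc] at hF
            exact mem_powerset.mpr (sdiff_subset_sdiff subset_rfl hF.1)
          · intro G hG
            simp only [mem_powerset, subset_sdiff] at hG
            simp only [mem_Icc, subset_sdiff, sdiff_subset, and_true]
            exact ⟨hTS, hG.2.symm⟩
          · intro F hF
            exact Finset.sdiff_sdiff_eq_self (mem_Icc.mp hF).2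
          · intro G hG
            exact Finset.sdiff_sdiff_eq_self ((mem_powerset.mp hG).trans sdiff_subset)
          · intro F hF
            rw [card_sdiff_of_subset (mem_Icc.mp hF).2]
      _ = if T = S then 1 else 0 := by
          rw [sum_powerset_neg_one_pow_card]
          exact if_congr (sdiff_eq_empty_iff_subset.trans
            ⟨fun h => subset_antisymm hTS h, fun h => h ▸ subset_rfl⟩) rfl rfl
  · rw [Icc_eq_empty hTS, sum_empty, if_neg fun h : T = S => hTS h.le]

theorem sum_powerset_neg_one_pow_mul_card_filter_subset (S : Finset ι) (A : Finset α)
    (D : α → Finset ι) :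
    ∑ F ∈ S.powerset, (-1 : ℤ) ^ (#S - #F) * #{a ∈ A | D a ⊆ F} = #{a ∈ A | D a = S} := by
  simp only [card_filter, Nat.cast_sum, Nat.cast_ite, Nat.cast_one, Nat.cast_zero, mul_sum,
    mul_ite, mul_one, mul_zero]
  rw [sum_comm]
  refine sum_congr rfl fun a _ => ?_
  rw [← sum_filter, ← Icc_eq_filter_powerset, sum_Icc_neg_one_pow_card_sub_card]

end InclusionExclusion

def changeSet {n : ℕ} (w : Fin (n + 1) → ℕ) : Finset ℕ :=
  {i ∈ Icc 1 n | wv w (i - 1) ≠ wv w i}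

theorem changeSet_subset_iff {n : ℕ} (w : Fin (n + 1) → ℕ) (F : Finset ℕ) :
    changeSet w ⊆ F ↔ ∀ i ∈ Icc 1 n, i ∉ F → wv w (i - 1) = wv w i := by
  simp only [changeSet, subset_iff, mem_filter]
  exact ⟨fun h i hi hiF => not_not.mp fun hne => hiF (h ⟨hi, hne⟩),
    fun h i hi => not_not.mp fun hiF => hi.2 (h i hi.1 hiF)⟩

theorem changeSet_eq_Icc_iff {n : ℕ} (w : Fin (n + 1) → ℕ) :
    changeSet w = Icc 1 n ↔ ∀ i < n, wv w i ≠ wv w (i + 1) := by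
  rw [changeSet, filter_eq_self]
  constructor
  · intro h i hi
    simpa using h (i + 1) (mem_Icc.mpr ⟨by omega, by omega⟩)
  · intro h i hi
    obtain ⟨hi1, hin⟩ := mem_Icc.mp hi
    obtain ⟨j, rfl⟩ := Nat.exists_eq_add_of_le' hi1
    simpa using h j (by omega)

theorem inclusion_exclusion_smirnov_general (n r : ℕ) (k : ℕ) :
    ∑ F ∈ (Finset.Icc 1 n).powerset,
        (-1 : ℤ) ^ (n - F.card) *
          (((Fintype.piFinset fun _ : Fin (n + 1) => Finset.range r).filter fun w =>
              wv w 0 = 0 ∧ wv w n = 0 ∧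
                (∀ i ∈ Finset.Icc 1 n, i ∉ F → wv w (i - 1) = wv w i) ∧
                asc w = k).card : ℤ) =
      (((smirnov n r).filter fun w => asc w = k).card : ℤ) := by
  set A := (Fintype.piFinset fun _ : Fin (n + 1) => Finset.range r).filter fun w =>
    wv w 0 = 0 ∧ wv w n = 0 ∧ asc w = k
  have smirnov_filter : (smirnov n r).filter (asc · = k) = {w ∈ A | changeSet w = Icc 1 n} := by
    ext w
    simp only [smirnov, A, mem_filter, changeSet_eq_Icc_iff]
    tauto
  rw [smirnov_filter, ← sum_powerset_neg_one_pow_mul_card_filter_subset, Nat.card_Icc,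
    Nat.add_sub_cancel]
  refine sum_congr rfl fun F _ => ?_
  congr 3
  ext w
  simp only [A, mem_filter, changeSet_subset_iff]
  tauto

/-- Inclusion–exclusion: `Σ_{F ⊆ {1,…,n}} (-1)^{n-|F|} N_F(k)` equals the number of
Smirnov words `w ∈ S(n,r)` with exactly `k` ascents, where `N_F(k)` counts the words
`w = (w_0,…,w_n) ∈ {0,…,r-1}^{n+1}` with `w_0 = w_n = 0`, `w_{i-1} = w_i` for all
`i ∈ {1,…,n} \ F`, and exactly `k` ascents. -/
theorem inclusion_exclusion_smirnov (n r : ℕ) (hn : 0 < n) (hr : 0 < r) (k : ℕ) :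
    ∑ F ∈ (Finset.Icc 1 n).powerset,
        (-1 : ℤ) ^ (n - F.card) *
          (((Fintype.piFinset fun _ : Fin (n + 1) => Finset.range r).filter fun w =>
              wv w 0 = 0 ∧ wv w n = 0 ∧
                (∀ i ∈ Finset.Icc 1 n, i ∉ F → wv w (i - 1) = wv w i) ∧
                asc w = k).card : ℤ) =
      (((smirnov n r).filter fun w => asc w = k).card : ℤ) :=
  inclusion_exclusion_smirnov_general n r k
end
end

section
/- Let n and r be positive integers and let w ∈ S(n,r). If k is a double ascent of w, then the set {ℓ : k < ℓ < n and w_{ℓ+1} < w_k} is nonempty, and for its smallest element ℓ one has w_k ≤ w_ℓ. Moreover, the following are equivalent: (a) for every double ascent k of w, letting ℓ be the smallest index with k < ℓ < n and w_{ℓ+1} < w_k, one has w_k = w_ℓ; (b) w has the matching property. -/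
open scoped Classical

noncomputable section

/-- The set of indices `ℓ` with `k < ℓ < n` and `w_{ℓ+1} < w_k`. -/
def rightSet {n : ℕ} (w : Fin (n + 1) → ℕ) (k : ℕ) : Set ℕ :=
  {l | k < l ∧ l < n ∧ wv w (l + 1) < wv w k}

/-- The set of indices `ℓ` with `1 ≤ ℓ < k` and `w_{ℓ-1} < w_k`. -/
def leftSet {n : ℕ} (w : Fin (n + 1) → ℕ) (k : ℕ) : Set ℕ :=
  {l | 1 ≤ l ∧ l < k ∧ wv w (l - 1) < wv w k}

/-- The word `w'` obtained from `w` by deleting `w_k` and inserting it between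
`w_{ℓ-1}` and `w_ℓ` (for `ℓ < k`): `w'_ℓ = w_k`, `w'_{i+1} = w_i` for `ℓ ≤ i < k`,
and `w'_i = w_i` for all other indices. -/
def leftMove {n : ℕ} (w : Fin (n + 1) → ℕ) (k l : ℕ) : Fin (n + 1) → ℕ :=
  fun i => if (i : ℕ) = l then wv w k
    else if l < (i : ℕ) ∧ (i : ℕ) ≤ k then wv w ((i : ℕ) - 1) else w i

/-- The word `w''` obtained from `w` by deleting `w_k` and inserting it between
`w_ℓ` and `w_{ℓ+1}` (for `k < ℓ`): `w''_ℓ = w_k`, `w''_{i-1} = w_i` for `k < i ≤ ℓ`,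
and `w''_i = w_i` for all other indices. -/
def rightMove {n : ℕ} (w : Fin (n + 1) → ℕ) (k l : ℕ) : Fin (n + 1) → ℕ :=
  fun i => if (i : ℕ) = l then wv w k
    else if k ≤ (i : ℕ) ∧ (i : ℕ) < l then wv w ((i : ℕ) + 1) else w i

/-! For a double ascent `k`, `w_n = 0 < w_k` puts `n - 1` into `rightSet w k`, and minimality of
`ℓ = min (rightSet w k)` means `w_j ≥ w_k` for `k < j ≤ ℓ`. If moreover `w_ℓ = w_k`, then
`w_{ℓ-1} ≥ w_ℓ`, hence `w_{ℓ-1} > w_ℓ` by the Smirnov condition, and `ℓ` is a matching double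
descent. Conversely, a matching double descent lies in `rightSet w k` while no earlier index
does, so it is `ℓ`. -/

section RightSet

variable {n : ℕ} {w : Fin (n + 1) → ℕ} {k : ℕ}

theorem rightSet_nonempty (hlast : wv w n = 0) (hk : doubleAscent w k) :
    (rightSet w k).Nonempty := by
  obtain ⟨-, hkn, hprev, hup⟩ := hk
  have hkn' : k + 1 < n := by
    by_contra! h
    rw [show k + 1 = n by omega, hlast] at hup
    omega
  exact ⟨n - 1, by omega, by omega, by rw [Nat.sub_add_cancel (by omega), hlast]; omega⟩

theorem wv_le_of_le_sInf_rightSet (hup : wv w k < wv w (k + 1)) {j : ℕ} (hkj : k < j)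
    (hj : j ≤ sInf (rightSet w k)) : wv w k ≤ wv w j := by
  obtain rfl | hkj' := eq_or_lt_of_le (show k + 1 ≤ j by omega)
  · exact hup.le
  have hne : (rightSet w k).Nonempty := by
    by_contra h
    rw [Set.not_nonempty_iff_eq_empty.mp h, Nat.sInf_empty] at hj
    omega
  have hlt : sInf (rightSet w k) < n := (Nat.sInf_mem hne).2.1
  have hprev : j - 1 ∉ rightSet w k := Nat.notMem_of_lt_sInf (by omega)
  simp only [rightSet, Set.mem_ofPred_eq, not_and, not_lt] at hprev
  simpa only [Nat.sub_add_cancel (by omega : 1 ≤ j)] using hprev (by omega) (by omega)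

theorem doubleDescent_sInf_rightSet (hsm : ∀ i < n, wv w i ≠ wv w (i + 1))
    (hup : wv w k < wv w (k + 1)) (hne : (rightSet w k).Nonempty)
    (heq : wv w k = wv w (sInf (rightSet w k))) : doubleDescent w (sInf (rightSet w k)) := by
  set m := sInf (rightSet w k)
  obtain ⟨hkm, hmn, hdown⟩ : m ∈ rightSet w k := Nat.sInf_mem hne
  have hkm' : k + 1 < m := by
    obtain h | h := eq_or_lt_of_le (show k + 1 ≤ m by omega)
    · rw [h] at hup; omega
    · exact h
  have hprev : wv w k ≤ wv w (m - 1) := wv_le_of_le_sInf_rightSet hup (by omega) (by omega)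
  have hstep := hsm (m - 1) (by omega)
  rw [Nat.sub_add_cancel (by omega)] at hstep
  exact ⟨by omega, hmn, by omega, by omega⟩

theorem sInf_rightSet_eq {l : ℕ} (hkl : k < l) (hln : l < n) (hdown : wv w (l + 1) < wv w l)
    (heq : wv w k = wv w l) (hbetween : ∀ j, k < j → j < l → wv w k ≤ wv w j) :
    sInf (rightSet w k) = l := by
  have hl : l ∈ rightSet w k := ⟨hkl, hln, heq ▸ hdown⟩
  refine le_antisymm (Nat.sInf_le hl) (le_csInf ⟨l, hl⟩ fun m ⟨hkm, _, hm⟩ => ?_)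
  by_contra! hml
  obtain h | h := eq_or_lt_of_le (show m + 1 ≤ l by omega)
  · rw [h] at hm; omega
  · have := hbetween (m + 1) (by omega) h; omega

end RightSet

theorem rightSet_nonempty_and_matching_iff_general (n r : ℕ)
    (w : Fin (n + 1) → ℕ) (hw : w ∈ smirnov n r) :
    (∀ k, doubleAscent w k →
      (rightSet w k).Nonempty ∧ wv w k ≤ wv w (sInf (rightSet w k))) ∧
    ((∀ k, doubleAscent w k → wv w k = wv w (sInf (rightSet w k))) ↔ hasMatching w) := by
  simp only [smirnov, Finset.mem_filter] at hw
  obtain ⟨-, -, hlast, hsm⟩ := hw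
  have hmem (k : ℕ) (hk : doubleAscent w k) : sInf (rightSet w k) ∈ rightSet w k :=
    Nat.sInf_mem (rightSet_nonempty hlast hk)
  refine ⟨fun k hk => ⟨rightSet_nonempty hlast hk,
    wv_le_of_le_sInf_rightSet hk.2.2.2 (hmem k hk).1 le_rfl⟩, fun heq k hk => ?_, fun hm k hk => ?_⟩
  · exact ⟨_, (hmem k hk).1,
      doubleDescent_sInf_rightSet hsm hk.2.2.2 (rightSet_nonempty hlast hk) (heq k hk),
      heq k hk, fun j hkj hj => wv_le_of_le_sInf_rightSet hk.2.2.2 hkj hj.le⟩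
  · obtain ⟨l, hkl, ⟨-, hln, -, hdown⟩, hkl_eq, hbetween⟩ := hm k hk
    rw [sInf_rightSet_eq hkl hln hdown hkl_eq hbetween, hkl_eq]

/-- For `w ∈ S(n,r)`: if `k` is a double ascent of `w` then the set of indices `ℓ` with
`k < ℓ < n` and `w_{ℓ+1} < w_k` is nonempty and its smallest element `ℓ` satisfies
`w_k ≤ w_ℓ`; moreover `w` has the matching property iff for every double ascent `k`,
the smallest such `ℓ` satisfies `w_k = w_ℓ`. -/
theorem rightSet_nonempty_and_matching_iff (n r : ℕ) (hn : 0 < n) (hr : 0 < r)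
    (w : Fin (n + 1) → ℕ) (hw : w ∈ smirnov n r) :
    (∀ k, doubleAscent w k →
      (rightSet w k).Nonempty ∧ wv w k ≤ wv w (sInf (rightSet w k))) ∧
    ((∀ k, doubleAscent w k → wv w k = wv w (sInf (rightSet w k))) ↔ hasMatching w) :=
  rightSet_nonempty_and_matching_iff_general n r w hw
end
end

section
/- Let n and r be positive integers, let w ∈ S(n,r), and let k ∈ {1,…,n−1} be a double descent of w. Then the set {ℓ : 1 ≤ ℓ < k and w_{ℓ−1} < w_k} is nonempty, and for its largest element ℓ one has w_ℓ ≥ w_k. Moreover, if w_ℓ > w_k, then the word w' = (w'_0, w'_1, …, w'_n) defined by w'_ℓ = w_k, w'_{i+1} = w_i for ℓ ≤ i < k, and w'_i = w_i for all other indices i, belongs to S(n,r) and satisfies asc(w') = asc(w) + 1. -/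
open scoped Classical

noncomputable section

/-!
Since `w₀ = 0 < w_k < w_{k-1}`, the index `1` lies in the left set, so its maximum `ℓ` exists.
If `w_ℓ < w_k`, then `ℓ + 1` would be a larger element of the left set, unless `ℓ + 1 = k`,
which contradicts `w_{k-1} > w_k`.

When `w_{ℓ-1} < w_k < w_ℓ`, the ascent indicator of the moved word is that of `w` with a `1`
inserted at `ℓ` (the new ascent `w_k < w_ℓ`) and the `0` at `k` (the descent `w_k > w_{k+1}`)
deleted: the ascent at `ℓ - 1` survives as `w_{ℓ-1} < w_k`, and the new descent
`w_{k-1} > w_{k+1}` takes the place of the old one `w_{k-1} > w_k`.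
-/

open Finset

theorem Finset.sum_range_add_eq_of_insert_erase {M : Type*} [AddCommMonoid M] {f g : ℕ → M}
    {l k n : ℕ} (hlk : l ≤ k) (hkn : k < n) (hbefore : ∀ i < l, g i = f i)
    (hshift : ∀ i, l < i → i ≤ k → g i = f (i - 1)) (hafter : ∀ i, k < i → i < n → g i = f i) :
    ∑ i ∈ range n, g i + f k = ∑ i ∈ range n, f i + g l := by
  have hhead : ∑ i ∈ range (k + 1), g i = ∑ i ∈ range k, f i + g l := by
    have hmid : ∑ i ∈ Ico (l + 1) (k + 1), g i = ∑ i ∈ Ico l k, f i := by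
      rw [← sum_Ico_add_right_sub_eq l k 1]
      refine sum_congr rfl fun i hi => ?_
      have := mem_Ico.1 hi
      exact hshift i (by omega) (by omega)
    rw [← sum_range_add_sum_Ico _ (by omega : l ≤ k + 1), ← sum_range_add_sum_Ico f hlk,
      sum_eq_sum_Ico_succ_bot (by omega), hmid,
      sum_congr rfl fun i hi => hbefore i (mem_range.1 hi)]
    abel
  have htail : ∑ i ∈ Ico (k + 1) n, g i = ∑ i ∈ Ico (k + 1) n, f i :=
    sum_congr rfl fun i hi => hafter i (mem_Ico.1 hi).1 (mem_Ico.1 hi).2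
  rw [← sum_range_add_sum_Ico g hkn, ← sum_range_add_sum_Ico f hkn, hhead, htail, sum_range_succ]
  abel

section

variable {n r : ℕ} {w : Fin (n + 1) → ℕ} {k l : ℕ}

lemma wv_of_lt (w : Fin (n + 1) → ℕ) {i : ℕ} (hi : i < n + 1) : wv w i = w ⟨i, hi⟩ := dif_pos hi

lemma mem_smirnov :
    w ∈ smirnov n r ↔ (∀ i < n + 1, wv w i < r) ∧ wv w 0 = 0 ∧ wv w n = 0 ∧
      ∀ i < n, wv w i ≠ wv w (i + 1) := by
  simp only [smirnov, mem_filter, Fintype.mem_piFinset, mem_range, Fin.forall_iff]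
  constructor <;> rintro ⟨hlt, hrest⟩ <;> refine ⟨fun i hi => ?_, hrest⟩
  · rw [wv_of_lt w hi]; exact hlt i hi
  · rw [← wv_of_lt w hi]; exact hlt i hi

lemma wv_leftMove {i : ℕ} (hi : i < n + 1) :
    wv (leftMove w k l) i =
      if i = l then wv w k else if l < i ∧ i ≤ k then wv w (i - 1) else wv w i := by
  rw [wv_of_lt _ hi, wv_of_lt w hi]
  rfl

lemma one_mem_leftSet (h0 : wv w 0 = 0) (hk : doubleDescent w k) : 1 ∈ leftSet w k := by
  obtain ⟨hk1, -, hprev, hnext⟩ := hk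
  have hk2 : 1 < k := by
    by_contra! hk
    obtain rfl : k = 1 := by omega
    simp [h0] at hprev
  exact ⟨le_rfl, hk2, by simp only [Nat.sub_self, h0]; omega⟩

lemma bddAbove_leftSet : BddAbove (leftSet w k) := ⟨k, fun _ hl => hl.2.1.le⟩

lemma wv_le_wv_sSup_leftSet (hne : (leftSet w k).Nonempty) (hk : wv w k ≤ wv w (k - 1)) :
    wv w k ≤ wv w (sSup (leftSet w k)) := by
  set l := sSup (leftSet w k)
  obtain ⟨hl1, hlk, -⟩ : l ∈ leftSet w k := Nat.sSup_mem hne bddAbove_leftSet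
  by_contra! hlt
  have hk' : l + 1 ≠ k := by
    intro h
    rw [show k - 1 = l by omega] at hk
    omega
  have : l + 1 ≤ l := le_csSup bddAbove_leftSet ⟨by omega, by omega, by simpa using hlt⟩
  omega

lemma leftMove_mem_smirnov (hw : w ∈ smirnov n r) (hl : 0 < l) (hlk : l < k) (hkn : k < n)
    (hprev : wv w (l - 1) ≠ wv w k) (hnext : wv w k ≠ wv w l)
    (hskip : wv w (k - 1) ≠ wv w (k + 1)) : leftMove w k l ∈ smirnov n r := by
  obtain ⟨hr, h0, hn, hadj⟩ := mem_smirnov.1 hw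
  refine mem_smirnov.2 ⟨fun i hi => ?_, ?_, ?_, fun i hi => ?_⟩
  · rw [wv_leftMove hi]
    split_ifs <;> apply hr <;> omega
  · rw [wv_leftMove (by omega), if_neg (by omega), if_neg (by omega), h0]
  · rw [wv_leftMove (by omega), if_neg (by omega), if_neg (by omega), hn]
  · rw [wv_leftMove (by omega), wv_leftMove (by omega)]
    split_ifs <;> grind

lemma asc_eq_sum (w : Fin (n + 1) → ℕ) :
    asc w = ∑ i ∈ range n, if wv w i < wv w (i + 1) then 1 else 0 :=
  card_filter _ _

lemma asc_leftMove (hk : doubleDescent w k) (hlk : l < k) (hprev : wv w (l - 1) < wv w k)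
    (hnext : wv w k < wv w l) : asc (leftMove w k l) = asc w + 1 := by
  obtain ⟨-, hkn, hdesc, hdesc'⟩ := hk
  have hold : (if wv w k < wv w (k + 1) then 1 else 0) = 0 := if_neg (by omega)
  have hnew : (if wv (leftMove w k l) l < wv (leftMove w k l) (l + 1) then 1 else 0) = 1 := by
    simp only [wv_leftMove (by omega : l < n + 1), wv_leftMove (by omega : l + 1 < n + 1)]
    simp [hlk, hnext]
  have key := sum_range_add_eq_of_insert_erase
    (f := fun i => if wv w i < wv w (i + 1) then 1 else 0)
    (g := fun i => if wv (leftMove w k l) i < wv (leftMove w k l) (i + 1) then 1 else 0)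
    hlk.le hkn ?_ ?_ ?_
  · simp only [hold, hnew, add_zero] at key
    rw [asc_eq_sum, asc_eq_sum, key]
  all_goals
    intros
    grind [wv_leftMove]

end

theorem leftMatch_mem_and_asc_general (n r : ℕ)
    (w : Fin (n + 1) → ℕ) (hw : w ∈ smirnov n r) (k : ℕ) (hk : doubleDescent w k) :
    (leftSet w k).Nonempty ∧
    wv w k ≤ wv w (sSup (leftSet w k)) ∧
    (wv w k < wv w (sSup (leftSet w k)) →
      leftMove w k (sSup (leftSet w k)) ∈ smirnov n r ∧
        asc (leftMove w k (sSup (leftSet w k))) = asc w + 1) := by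
  have hne : (leftSet w k).Nonempty := ⟨1, one_mem_leftSet (mem_smirnov.1 hw).2.1 hk⟩
  obtain ⟨hl, hlk, hprev⟩ : sSup (leftSet w k) ∈ leftSet w k :=
    Nat.sSup_mem hne bddAbove_leftSet
  have hdesc : wv w k < wv w (k - 1) := hk.2.2.1
  refine ⟨hne, wv_le_wv_sSup_leftSet hne hdesc.le, fun hnext => ⟨?_, ?_⟩⟩
  · exact leftMove_mem_smirnov hw hl hlk hk.2.1 hprev.ne hnext.ne (hk.2.2.2.trans hdesc).ne'
  · exact asc_leftMove hk hlk hprev hnext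

/-- For `w ∈ S(n,r)` and a double descent `k` of `w`: the set of indices `ℓ` with
`1 ≤ ℓ < k` and `w_{ℓ-1} < w_k` is nonempty; its largest element `ℓ` satisfies
`w_ℓ ≥ w_k`; and if `w_ℓ > w_k`, then the left match `w'` (obtained by deleting `w_k`
and inserting it between `w_{ℓ-1}` and `w_ℓ`) belongs to `S(n,r)` and has exactly one
more ascent than `w`. -/
theorem leftMatch_mem_and_asc (n r : ℕ) (hn : 0 < n) (hr : 0 < r)
    (w : Fin (n + 1) → ℕ) (hw : w ∈ smirnov n r) (k : ℕ) (hk : doubleDescent w k) :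
    (leftSet w k).Nonempty ∧
    wv w k ≤ wv w (sSup (leftSet w k)) ∧
    (wv w k < wv w (sSup (leftSet w k)) →
      leftMove w k (sSup (leftSet w k)) ∈ smirnov n r ∧
        asc (leftMove w k (sSup (leftSet w k))) = asc w + 1) :=
  leftMatch_mem_and_asc_general n r w hw k hk
end
end
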